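/- arXiv:1508.05766 — 3 statements merged into one kernel-verified Lean document; each statement's English description precedes it below -/
import Mathlib

section
/- Let 𝔸 = (A, R_1, …, R_n) and 𝔹 = (A, S_1, …, S_m) be two relational structures on the same set A, and let I = (V, 𝒞) be an instance of CSP(𝔸). Assume r, s are positive integers and J = (W, 𝒟) is an instance of CSP(𝔹) such that 𝒫_𝔸^s(I) ⊢ J and 𝒫_𝔹^r(J) ⊢ G. Then 𝒫_𝔸^{r+s}(I) ⊢ G. -/
namespace CSPPaper

/-- A relational structure on `A`: a family of finitary relations (the basic
relations), a relation of arity `n` being a set of `n`-tuples `Fin n → A`. -/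
structure RelStruct (A : Type) where
  basic : Set (Σ n : ℕ, Set (Fin n → A))

/-- A CSP instance with variables `V` over domain `A`: a set of constraints,
each consisting of a scope (a tuple of variables) and a constraint relation. -/
structure Instance (A : Type) (V : Type) where
  constraints : Set (Σ n : ℕ, (Fin n → V) × Set (Fin n → A))

/-- `f : V → A` is a solution of the instance `I`. -/
def Instance.Sol {A V : Type} (I : Instance A V) (f : V → A) : Prop :=
  ∀ c ∈ I.constraints, (fun i => f (c.2.1 i)) ∈ c.2.2

def Instance.Satisfiable {A V : Type} (I : Instance A V) : Prop :=
  ∃ f, I.Sol f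

/-- `I` is an instance of `CSP(𝔸)`: all its constraint relations are basic
relations of `𝔸`. -/
def IsCSPInstance {A V : Type} (𝔸 : RelStruct A) (I : Instance A V) : Prop :=
  ∀ c ∈ I.constraints, (⟨c.1, c.2.2⟩ : Σ n : ℕ, Set (Fin n → A)) ∈ 𝔸.basic

/-- An atom of a Datalog rule over the variable set `Fin r`: a predicate
(a relation on `A`) applied to a tuple of variables. -/
structure Atom (A : Type) (r : ℕ) where
  arity : ℕ
  scope : Fin arity → Fin r
  rel : Set (Fin arity → A)

def Atom.holds {A : Type} {r : ℕ} (a : Atom A r) (f : Fin r → A) : Prop :=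
  (fun i => f (a.scope i)) ∈ a.rel

/-- A rule of the `r`-ary maximal symmetric Datalog program `𝒫_𝔸^r` consistent
with `𝔸`: a linear Datalog rule on at most `r` variables, whose head is an IDB
(an arbitrary relation on `A` of arity at most `r`), whose body contains at most
one IDB atom (`idb`) and otherwise non-IDB atoms for basic relations of `𝔸`
of arity at most `r` (`edb`, without repetition), such that the rule is
consistent with `𝔸`, and, if the body contains an IDB atom, its mirror image is
also consistent with `𝔸`. -/
structure Rule (A : Type) (𝔸 : RelStruct A) (r : ℕ) where
  head : Atom A r
  idb : Option (Atom A r)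
  edb : List (Atom A r)
  head_arity : head.arity ≤ r
  idb_arity : ∀ a ∈ idb, a.arity ≤ r
  edb_arity : ∀ a ∈ edb, a.arity ≤ r
  edb_basic : ∀ a ∈ edb, (⟨a.arity, a.rel⟩ : Σ n : ℕ, Set (Fin n → A)) ∈ 𝔸.basic
  nodup : edb.Nodup
  consistent : ∀ f : Fin r → A,
    (∀ a ∈ idb, a.holds f) → (∀ a ∈ edb, a.holds f) → head.holds f
  mirror : ∀ a ∈ idb, ∀ f : Fin r → A,
    head.holds f → (∀ b ∈ edb, b.holds f) → a.holds f

/-- `Derives 𝔸 r I ρ R`: the `r`-ary maximal symmetric Datalog program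
`𝒫_𝔸^r` consistent with `𝔸`, run on the instance `I`, derives `R(ρ)`.
This holds if `(ρ, R)` is a constraint of `I`, or if some rule of `𝒫_𝔸^r`
with head `R(τ)` admits an evaluation `ω` of its variables into `V` with
`ω ∘ τ = ρ`, whose (at most one) IDB body atom is derived and whose non-IDB
body atoms are constraints of `I` under `ω`. -/
inductive Derives {A V : Type} (𝔸 : RelStruct A) (r : ℕ) (I : Instance A V) :
    ∀ {n : ℕ}, (Fin n → V) → Set (Fin n → A) → Prop
  | base {n : ℕ} (ρ : Fin n → V) (R : Set (Fin n → A)) :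
      (⟨n, ρ, R⟩ : Σ n : ℕ, (Fin n → V) × Set (Fin n → A)) ∈ I.constraints →
      Derives 𝔸 r I ρ R
  | step (rule : Rule A 𝔸 r) (ω : Fin r → V) :
      (∀ a ∈ rule.idb, Derives 𝔸 r I (fun i => ω (a.scope i)) a.rel) →
      (∀ a ∈ rule.edb,
        (⟨a.arity, fun i => ω (a.scope i), a.rel⟩ :
          Σ n : ℕ, (Fin n → V) × Set (Fin n → A)) ∈ I.constraints) →
      Derives 𝔸 r I (fun i => ω (rule.head.scope i)) rule.head.rel

/-- `𝒫_𝔸^r(I) ⊢ G`: the program derives a goal predicate, i.e. an empty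
relation of arity at most `r`. -/
def DerivesGoal {A V : Type} (𝔸 : RelStruct A) (r : ℕ) (I : Instance A V) : Prop :=
  ∃ (n : ℕ) (ρ : Fin n → V), n ≤ r ∧ Derives 𝔸 r I ρ (∅ : Set (Fin n → A))

/-- `𝒫_𝔸^r(I) ⊢ J`: the program run on `I` derives every constraint of `J`. -/
def DerivesInstance {A V : Type} (𝔸 : RelStruct A) (r : ℕ) (I J : Instance A V) : Prop :=
  ∀ c ∈ J.constraints, Derives 𝔸 r I c.2.1 c.2.2

/-- An `m`-ary operation `t` preserves the `n`-ary relation `R`. -/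
def PreservesRel {A : Type} {m n : ℕ} (t : (Fin m → A) → A) (R : Set (Fin n → A)) : Prop :=
  ∀ rows : Fin m → Fin n → A, (∀ j, rows j ∈ R) → (fun i => t (fun j => rows j i)) ∈ R

/-- A polymorphism of `𝔸`: an operation preserving all basic relations. -/
def IsPolymorphism {A : Type} {m : ℕ} (𝔸 : RelStruct A) (t : (Fin m → A) → A) : Prop :=
  ∀ R ∈ 𝔸.basic, PreservesRel t R.2

def ternaryOp {A : Type} (p : A → A → A → A) : (Fin 3 → A) → A :=
  fun v => p (v 0) (v 1) (v 2)

/-- A chain of `n` Hagemann–Mitschke terms: idempotent ternary operations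
`p 0, …, p n` with `p 0 x y z = x`, `p k x x y = p (k+1) x y y`, `p n x y z = z`. -/
def IsHMChain {A : Type} (n : ℕ) (p : ℕ → A → A → A → A) : Prop :=
  (∀ k ≤ n, ∀ x : A, p k x x x = x) ∧
  (∀ x y z : A, p 0 x y z = x) ∧
  (∀ x y z : A, p n x y z = z) ∧
  (∀ k < n, ∀ x y : A, p k x x y = p (k + 1) x y y)

def Pres3Set {A : Type} (p : A → A → A → A) (S : Set A) : Prop :=
  ∀ x y z, x ∈ S → y ∈ S → z ∈ S → p x y z ∈ S

def Pres3Rel {A : Type} (p : A → A → A → A) (E : Set (A × A)) : Prop :=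
  ∀ u v w, u ∈ E → v ∈ E → w ∈ E → (p u.1 v.1 w.1, p u.2 v.2 w.2) ∈ E

def PresOpSet {A : Type} {m : ℕ} (t : (Fin m → A) → A) (S : Set A) : Prop :=
  ∀ x : Fin m → A, (∀ j, x j ∈ S) → t x ∈ S

def PresOpRel {A : Type} {m : ℕ} (t : (Fin m → A) → A) (E : Set (A × A)) : Prop :=
  ∀ x y : Fin m → A, (∀ j, (x j, y j) ∈ E) → (t x, t y) ∈ E

/-- A path instance of length `len`: variables `1, …, len`, one unary
constraint `B i` on each variable `i ∈ [1, len]`, and one binary constraint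
`E i` with scope `(i, i+1)` for each `i ∈ [1, len-1]`. -/
structure PathInstance (A : Type) where
  len : ℕ
  B : ℕ → Set A
  E : ℕ → Set (A × A)

/-- A solution of the subinstance of the path instance `I` induced by `[a, b]`. -/
def IsSolutionOn {A : Type} (I : PathInstance A) (a b : ℕ) (s : ℕ → A) : Prop :=
  (∀ i, a ≤ i → i ≤ b → s i ∈ I.B i) ∧
  (∀ i, a ≤ i → i + 1 ≤ b → (s i, s (i + 1)) ∈ I.E i)

def IsSolution {A : Type} (I : PathInstance A) (s : ℕ → A) : Prop :=
  IsSolutionOn I 1 I.len s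

def unaryRel {A : Type} (S : Set A) : Set (Fin 1 → A) := {f | f 0 ∈ S}

def pairRel {A : Type} (E : Set (A × A)) : Set (Fin 2 → A) := {f | (f 0, f 1) ∈ E}

/-- The path instance `I`, presented as a CSP instance on the variable set `ℕ`. -/
def PathInstance.toInstance {A : Type} (I : PathInstance A) : Instance A ℕ where
  constraints :=
    {c | (∃ i, 1 ≤ i ∧ i ≤ I.len ∧
            c = ⟨1, fun _ => i, unaryRel (I.B i)⟩) ∨
         (∃ i, 1 ≤ i ∧ i + 1 ≤ I.len ∧
            c = ⟨2, ![i, i + 1], pairRel (I.E i)⟩)}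

/-- An `n`-braid in the path instance `I`: solutions `s 0, …, s n` and indices
`1 ≤ idx 1 < … < idx n ≤ I.len` with `s k (idx k) = s (k+1) (idx k)` and
`s (k-1) (idx (k+1)) = s k (idx (k+1))` for `k = 1, …, n-1`. -/
def IsBraid {A : Type} (I : PathInstance A) (n : ℕ) (s : ℕ → ℕ → A) (idx : ℕ → ℕ) : Prop :=
  (∀ k ≤ n, IsSolution I (s k)) ∧
  1 ≤ idx 1 ∧ idx n ≤ I.len ∧
  (∀ k, 1 ≤ k → k < n → idx k < idx (k + 1)) ∧
  (∀ k, 1 ≤ k → k + 1 ≤ n →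
    s k (idx k) = s (k + 1) (idx k) ∧ s (k - 1) (idx (k + 1)) = s k (idx (k + 1)))

/-- The binary constraint of `I` with scope `(i, i+1)` is subdirect. -/
def SubdirectAt {A : Type} (I : PathInstance A) (i : ℕ) : Prop :=
  (I.B i).Nonempty ∧ (I.B (i + 1)).Nonempty ∧
  (∀ a ∈ I.B i, ∃ b ∈ I.B (i + 1), (a, b) ∈ I.E i) ∧
  (∀ b ∈ I.B (i + 1), ∃ a ∈ I.B i, (a, b) ∈ I.E i)

/-- The subinstance of `I` induced by `[a, b]` is subdirect. -/
def SubdirectOn {A : Type} (I : PathInstance A) (a b : ℕ) : Prop :=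
  ∀ i, a ≤ i → i + 1 ≤ b → SubdirectAt I i

def Subdirect {A : Type} (I : PathInstance A) : Prop := SubdirectOn I 1 I.len

/-- The sets `C_i`: `C 1 = B 1` and
`C (i+1) = {b ∈ B (i+1) | ∃ c ∈ C i, (c, b) ∈ E i}`. -/
def reachSet {A : Type} (I : PathInstance A) : ℕ → Set A
  | 0 => ∅
  | 1 => I.B 1
  | (i + 2) => {b ∈ I.B (i + 2) | ∃ c ∈ reachSet I (i + 1), (c, b) ∈ I.E (i + 1)}

/-- `B_{i,i+1}` contains a backward edge: an edge `(b, c) ∈ E i` with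
`b ∈ B i \ C i` and `c ∈ C (i+1)`. -/
def BackwardAt {A : Type} (I : PathInstance A) (i : ℕ) : Prop :=
  1 ≤ i ∧ i + 1 ≤ I.len ∧
  ∃ b c, (b, c) ∈ I.E i ∧ b ∈ I.B i ∧ b ∉ reachSet I i ∧ c ∈ reachSet I (i + 1)

/-- Adjacency in the graph `Conn(I_{[lo,hi]})`: its vertices are pairs `(i, a)`
with `a ∈ B i`, `lo ≤ i ≤ hi`, and `(i, a)` is adjacent to `(i+1, b)` whenever
`(a, b) ∈ E i`. -/
def connAdj {A : Type} (I : PathInstance A) (lo hi : ℕ) (p q : ℕ × A) : Prop :=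
  lo ≤ p.1 ∧ p.1 + 1 ≤ hi ∧ q.1 = p.1 + 1 ∧
  p.2 ∈ I.B p.1 ∧ q.2 ∈ I.B q.1 ∧ (p.2, q.2) ∈ I.E p.1

/-- `λ_{I,lo,hi}`: the pairs `(a, b) ∈ B lo × B hi` joined by an undirected path
in `Conn(I_{[lo,hi]})`. -/
def lamRel {A : Type} (I : PathInstance A) (lo hi : ℕ) : Set (A × A) :=
  {ab | ab.1 ∈ I.B lo ∧ ab.2 ∈ I.B hi ∧
    Relation.ReflTransGen (fun p q => connAdj I lo hi p q ∨ connAdj I lo hi q p)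
      (lo, ab.1) (hi, ab.2)}

open Classical in
/-- The variable set `U` of the instance `I_λ`: the variables `1`, `len`, and
`i, i+1` for every index `i` such that `B_{i,i+1}` has a backward edge. -/
noncomputable def lamVars {A : Type} (I : PathInstance A) : Finset ℕ :=
  (Finset.Icc 1 I.len).filter
    (fun v => v = 1 ∨ v = I.len ∨ BackwardAt I v ∨ (2 ≤ v ∧ BackwardAt I (v - 1)))

/-- The `t`-th smallest element of `U` (`1`-indexed). -/
noncomputable def lamEnum {A : Type} (I : PathInstance A) (t : ℕ) : ℕ :=
  ((lamVars I).sort (· ≤ ·)).getD (t - 1) 0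

/-- The instance `I_λ`, presented as a path instance whose `t`-th variable is
the `t`-th smallest element of `U`: it consists of the subinstance of `I`
induced by `U`, where each gap between consecutive elements `u < w` of `U` with
`w > u + 1` is filled by the binary constraint `λ_{I,u,w}`. -/
noncomputable def lamInst {A : Type} (I : PathInstance A) : PathInstance A where
  len := (lamVars I).card
  B := fun t => I.B (lamEnum I t)
  E := fun t =>
    if lamEnum I (t + 1) = lamEnum I t + 1 then I.E (lamEnum I t)
    else lamRel I (lamEnum I t) (lamEnum I (t + 1))

/-- Unpacking an `m`-tuple of elements of `V^k` into an `m*k`-tuple of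
elements of `V`. -/
def unpackTuple {X : Type} {m k : ℕ} (σ : Fin m → Fin k → X) : Fin (m * k) → X :=
  fun t => σ t.divNat t.modNat

/-- Unpacking an `m`-ary relation on `A^k` into an `m*k`-ary relation on `A`. -/
def unpackRel {A : Type} {m k : ℕ} (U : Set (Fin m → Fin k → A)) :
    Set (Fin (m * k) → A) :=
  {t | ∃ u ∈ U, ∀ i : Fin (m * k), t i = u i.divNat i.modNat}

/-- The instance `I` has pathwidth at most `p`. -/
def PathwidthLE {A V : Type} (I : Instance A V) (p : ℕ) : Prop :=
  ∃ (m : ℕ) (U : Fin m → Set V),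
    (∀ v : V, ∃ i, v ∈ U i) ∧
    (∀ i, (U i).Finite ∧ (U i).ncard ≤ p + 1) ∧
    (∀ i j q : Fin m, i ≤ q → q ≤ j → ∀ v, v ∈ U i → v ∈ U j → v ∈ U q) ∧
    (∀ c ∈ I.constraints, ∃ i, Set.range c.2.1 ⊆ U i)

/-- `𝔸` has pathwidth duality `p`: for every unsatisfiable instance `I` of
`CSP(𝔸)` there is an unsatisfiable instance `J` of `CSP(𝔸)` of pathwidth at
most `p` such that identifying some variables of `J` (along `h`) yields a
subinstance of `I`. -/
def HasPathwidthDuality {A : Type} (𝔸 : RelStruct A) (p : ℕ) : Prop :=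
  ∀ (V : Type) (I : Instance A V), IsCSPInstance 𝔸 I → ¬I.Satisfiable →
    ∃ (W : Type) (J : Instance A W) (h : W → V),
      IsCSPInstance 𝔸 J ∧ ¬J.Satisfiable ∧ PathwidthLE J p ∧
      ∀ c ∈ J.constraints,
        (⟨c.1, fun i => h (c.2.1 i), c.2.2⟩ :
          Σ n : ℕ, (Fin n → V) × Set (Fin n → A)) ∈ I.constraints

/-- The `k`-th bubble power `𝔸^(k)` of `𝔸`: the relational structure on `A^k`
whose basic relations are all unary relations definable as conjunctions of
basic relations of `𝔸` (with identification of variables and dummy variables,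
but no existential quantification), and all binary relations
`E_ℐ = {(a, b) | ∀ (i,j) ∈ ℐ, a i = b j}` for `ℐ ⊆ [k]²`. -/
def bubblePower {A : Type} (𝔸 : RelStruct A) (k : ℕ) : RelStruct (Fin k → A) where
  basic :=
    {r | (∃ L : Set (Σ n : ℕ, (Fin n → Fin k) × Set (Fin n → A)),
            (∀ c ∈ L, (⟨c.1, c.2.2⟩ : Σ n : ℕ, Set (Fin n → A)) ∈ 𝔸.basic) ∧
            r = ⟨1, {f : Fin 1 → (Fin k → A) |
                      ∀ c ∈ L, (fun i => f 0 (c.2.1 i)) ∈ c.2.2}⟩) ∨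
         (∃ Idx : Set (Fin k × Fin k),
            r = ⟨2, {f : Fin 2 → (Fin k → A) | ∀ q ∈ Idx, f 0 q.1 = f 1 q.2}⟩)}

/-! A rule of `𝒫_𝔹^r` applied at `ω ∈ V^r` is simulated in `𝒫_𝔸^{r+s}` by keeping `ω` on the
first `r` variables, carrying a relation `Q ⊆ A^r` on them (the context), and using the last `s`
variables as scratch space. A constraint `C(σ)` of `J` derived by `𝒫_𝔸^s` can be conjoined to the
context by replaying its derivation on the scratch variables with `Q` attached (a relation `Q × C`
on `r + s` variables), and, because every rule is symmetric, removed again by replaying it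
backwards. Starting from the IDB atom of the `𝔹`-rule, one conjoins all its EDB constraints,
exchanges the IDB atom for the head (consistency and its mirror make the two contexts equal), and
removes the EDB constraints again. -/

theorem _root_.Fin.comp_append {X Y : Type} {m n : ℕ} (f : X → Y) (u : Fin m → X)
    (v : Fin n → X) :
    (fun i => f (Fin.append u v i)) = Fin.append (fun i => f (u i)) (fun i => f (v i)) := by
  funext i
  refine Fin.addCases (fun j => ?_) (fun j => ?_) i <;> simp

section Stacking

variable {A V : Type} {𝔸 : RelStruct A} {I : Instance A V}

def Atom.map {t u : ℕ} (e : Fin t → Fin u) (a : Atom A t) : Atom A u :=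
  ⟨a.arity, fun i => e (a.scope i), a.rel⟩

def Atom.constraintAt {t : ℕ} (a : Atom A t) (ω : Fin t → V) :
    Σ n : ℕ, (Fin n → V) × Set (Fin n → A) :=
  ⟨a.arity, fun i => ω (a.scope i), a.rel⟩

theorem Rule.idb_holds_iff_head_holds {t : ℕ} (rule : Rule A 𝔸 t) (f : Fin t → A)
    (hedb : ∀ e ∈ rule.edb, e.holds f) :
    (∀ a ∈ rule.idb, a.holds f) ↔ rule.head.holds f :=
  ⟨fun h => rule.consistent f h hedb, fun h a ha => rule.mirror a ha f h hedb⟩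

theorem Derives.mem_constraints_or_arity_le {t n : ℕ} {ρ : Fin n → V} {R : Set (Fin n → A)}
    (h : Derives 𝔸 t I ρ R) :
    (⟨n, ρ, R⟩ : Σ k : ℕ, (Fin k → V) × Set (Fin k → A)) ∈ I.constraints ∨ n ≤ t := by
  cases h with
  | base _ _ hmem => exact Or.inl hmem
  | step rule _ _ _ => exact Or.inr rule.head_arity

open Classical in
theorem Derives.of_consistent {t : ℕ} (ω : Fin t → V) (head : Atom A t)
    (idb : Option (Atom A t)) (edb : List (Atom A t)) (h_head : head.arity ≤ t)
    (h_idb : ∀ a ∈ idb, a.arity ≤ t ∧ Derives 𝔸 t I (fun i => ω (a.scope i)) a.rel)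
    (h_edb : ∀ e ∈ edb, e.arity ≤ t ∧
      (⟨e.arity, e.rel⟩ : Σ n : ℕ, Set (Fin n → A)) ∈ 𝔸.basic ∧
      e.constraintAt ω ∈ I.constraints)
    (consistent : ∀ f : Fin t → A,
      (∀ a ∈ idb, a.holds f) → (∀ e ∈ edb, e.holds f) → head.holds f)
    (mirror : ∀ a ∈ idb, ∀ f : Fin t → A,
      head.holds f → (∀ e ∈ edb, e.holds f) → a.holds f) :
    Derives 𝔸 t I (fun i => ω (head.scope i)) head.rel :=
  Derives.step
    { head, idb
      edb := edb.dedup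
      head_arity := h_head
      idb_arity := fun a ha => (h_idb a ha).1
      edb_arity := fun e he => (h_edb e (List.mem_dedup.1 he)).1
      edb_basic := fun e he => (h_edb e (List.mem_dedup.1 he)).2.1
      nodup := List.nodup_dedup edb
      consistent := fun f hi he => consistent f hi fun e he' => he e (List.mem_dedup.2 he')
      mirror := fun a ha f hh he => mirror a ha f hh fun e he' => he e (List.mem_dedup.2 he') }
    ω (fun a ha => (h_idb a ha).2) (fun e he => (h_edb e (List.mem_dedup.1 he)).2.2)

theorem Derives.of_forall_holds {t : ℕ} (ω : Fin t → V) (head : Atom A t)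
    (h_head : head.arity ≤ t) (h_holds : ∀ f, head.holds f) :
    Derives 𝔸 t I (fun i => ω (head.scope i)) head.rel :=
  Derives.of_consistent ω head none [] h_head (by simp) (by simp) (fun f _ _ => h_holds f)
    (by simp)

theorem Derives.iff_of_consistent {t : ℕ} (ω : Fin t → V) (body head : Atom A t)
    (edb : List (Atom A t)) (h_body : body.arity ≤ t) (h_head : head.arity ≤ t)
    (h_edb : ∀ e ∈ edb, e.arity ≤ t ∧
      (⟨e.arity, e.rel⟩ : Σ n : ℕ, Set (Fin n → A)) ∈ 𝔸.basic ∧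
      e.constraintAt ω ∈ I.constraints)
    (h_iff : ∀ f : Fin t → A, (∀ e ∈ edb, e.holds f) → (body.holds f ↔ head.holds f)) :
    Derives 𝔸 t I (fun i => ω (body.scope i)) body.rel ↔
      Derives 𝔸 t I (fun i => ω (head.scope i)) head.rel := by
  constructor
  · intro h
    refine Derives.of_consistent ω head (some body) edb h_head ?_ h_edb ?_ ?_
    · rintro a ⟨⟩
      exact ⟨h_body, h⟩
    · exact fun f hb he => (h_iff f he).1 (hb body rfl)
    · rintro a ⟨⟩ f hh he
      exact (h_iff f he).2 hh
  · intro h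
    refine Derives.of_consistent ω body (some head) edb h_body ?_ h_edb ?_ ?_
    · rintro a ⟨⟩
      exact ⟨h_head, h⟩
    · exact fun f hh he => (h_iff f he).2 (hh head rfl)
    · rintro a ⟨⟩ f hb he
      exact (h_iff f he).1 hb

theorem Derives.mono {t u n : ℕ} {ρ : Fin n → V} {R : Set (Fin n → A)} (ht : 1 ≤ t)
    (htu : t ≤ u) (h : Derives 𝔸 t I ρ R) : Derives 𝔸 u I ρ R := by
  induction h with
  | base ρ R hmem => exact Derives.base ρ R hmem
  | step rule ω _ hedb ih =>
    set e : Fin t → Fin u := Fin.castLE htu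
    set ω' : Fin u → V := Function.extend e ω (fun _ => ω ⟨0, ht⟩)
    have hω' : ∀ i, ω' (e i) = ω i := (Fin.castLE_injective htu).extend_apply _ _
    have h := Derives.of_consistent (𝔸 := 𝔸) (I := I) ω' (rule.head.map e)
      (rule.idb.map (Atom.map e)) (rule.edb.map (Atom.map e)) (rule.head_arity.trans htu)
      (by
        simp only [Option.mem_map, forall_exists_index, and_imp, forall_apply_eq_imp_iff₂]
        intro a ha
        simpa [Atom.map, hω'] using And.intro ((rule.idb_arity a ha).trans htu) (ih a ha))
      (by
        simp only [List.mem_map, forall_exists_index, and_imp, forall_apply_eq_imp_iff₂]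
        intro a ha
        simpa [Atom.map, Atom.constraintAt, hω'] using
          And.intro ((rule.edb_arity a ha).trans htu) (And.intro (rule.edb_basic a ha)
            (hedb a ha)))
      (fun f hi he => rule.consistent (fun j => f (e j))
        (fun a ha => hi _ (Option.mem_map_of_mem _ ha))
        (fun a ha => he _ (List.mem_map_of_mem ha)))
      (by
        simp only [Option.mem_map, forall_exists_index, and_imp, forall_apply_eq_imp_iff₂]
        exact fun a ha f hh he => rule.mirror a ha (fun j => f (e j)) hh
          (fun b hb => he _ (List.mem_map_of_mem hb)))
    simpa [Atom.map, hω'] using h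

section Context

variable {r s : ℕ}

def joinRel {m n : ℕ} (Q : Set (Fin m → A)) (C : Set (Fin n → A)) : Set (Fin (m + n) → A) :=
  {g | (fun i => g (Fin.castAdd n i)) ∈ Q ∧ (fun j => g (Fin.natAdd m j)) ∈ C}

theorem append_mem_joinRel {m n : ℕ} (Q : Set (Fin m → A)) (C : Set (Fin n → A))
    (q : Fin m → A) (c : Fin n → A) : Fin.append q c ∈ joinRel Q C ↔ q ∈ Q ∧ c ∈ C := by
  simp [joinRel]

def prefixAtom (s : ℕ) (Q : Set (Fin r → A)) : Atom A (r + s) :=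
  ⟨r, Fin.castAdd s, Q⟩

def joinAtom (Q : Set (Fin r → A)) (a : Atom A (r + s)) : Atom A (r + s) :=
  ⟨r + a.arity, Fin.append (Fin.castAdd s) a.scope, joinRel Q a.rel⟩

theorem joinAtom_holds (Q : Set (Fin r → A)) (a : Atom A (r + s)) (f : Fin (r + s) → A) :
    (joinAtom Q a).holds f ↔ (fun i => f (Fin.castAdd s i)) ∈ Q ∧ a.holds f := by
  simp only [joinAtom, Atom.holds, Fin.comp_append]
  exact append_mem_joinRel _ _ _ _

theorem derives_iff_derives_joinRel_head (rule : Rule A 𝔸 s) (ω : Fin s → V)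
    (hedb : ∀ e ∈ rule.edb, e.constraintAt ω ∈ I.constraints) (ρ : Fin r → V)
    (Q : Set (Fin r → A)) (body : Atom A (r + s)) (h_body : body.arity ≤ r + s)
    (h_iff : ∀ f : Fin (r + s) → A, (∀ e ∈ rule.edb, e.holds (fun j => f (Fin.natAdd r j))) →
      (body.holds f ↔
        (fun i => f (Fin.castAdd s i)) ∈ Q ∧ rule.head.holds (fun j => f (Fin.natAdd r j)))) :
    Derives 𝔸 (r + s) I (fun i => Fin.append ρ ω (body.scope i)) body.rel ↔
      Derives 𝔸 (r + s) I (Fin.append ρ fun i => ω (rule.head.scope i))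
        (joinRel Q rule.head.rel) := by
  have h := Derives.iff_of_consistent (Fin.append ρ ω) body
    (joinAtom Q (rule.head.map (Fin.natAdd r))) (rule.edb.map (Atom.map (Fin.natAdd r)))
    h_body (Nat.add_le_add_left rule.head_arity r)
    (by
      simp only [List.mem_map, forall_exists_index, and_imp, forall_apply_eq_imp_iff₂]
      intro e he
      simpa [Atom.map, Atom.constraintAt] using
        And.intro ((rule.edb_arity e he).trans (Nat.le_add_left s r))
          (And.intro (rule.edb_basic e he) (hedb e he)))
    (fun f he => (h_iff f fun e he' => he _ (List.mem_map_of_mem he')).trans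
      (joinAtom_holds Q (rule.head.map (Fin.natAdd r)) f).symm)
  simpa [joinAtom, Atom.map, Fin.comp_append] using h

theorem Derives.append_joinRel_iff (hr : 1 ≤ r) (hI : IsCSPInstance 𝔸 I) {n : ℕ}
    {τ : Fin n → V} {C : Set (Fin n → A)} (h : Derives 𝔸 s I τ C) (hn : n ≤ s)
    (ρ : Fin r → V) (Q : Set (Fin r → A)) :
    Derives 𝔸 (r + s) I (Fin.append ρ τ) (joinRel Q C) ↔ Derives 𝔸 (r + s) I ρ Q := by
  induction h with
  | @base n τ C hmem =>
    set e : Fin n → Fin s := Fin.castLE hn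
    set ω : Fin s → V := Function.extend e τ (fun _ => ρ ⟨0, hr⟩)
    have hω : ∀ j, ω (e j) = τ j := (Fin.castLE_injective hn).extend_apply _ _
    have h := Derives.iff_of_consistent (𝔸 := 𝔸) (I := I) (Fin.append ρ ω) (prefixAtom s Q)
      (joinAtom Q ⟨n, fun j => Fin.natAdd r (e j), C⟩) [⟨n, fun j => Fin.natAdd r (e j), C⟩]
      (Nat.le_add_right r s) (Nat.add_le_add_left hn r)
      (by simpa [Atom.constraintAt, hω] using
        And.intro (hn.trans (Nat.le_add_left s r)) (And.intro (hI _ hmem) hmem))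
      (fun f he => by
        rw [joinAtom_holds]
        exact (and_iff_left (he _ List.mem_cons_self)).symm)
    simpa [prefixAtom, joinAtom, Fin.comp_append, hω] using h.symm
  | step rule ω _ hedb ih =>
    rcases hO : rule.idb with _ | a
    · rw [← derives_iff_derives_joinRel_head rule ω hedb ρ Q (prefixAtom s Q)
        (Nat.le_add_right r s) ?_]
      · simp [prefixAtom]
      · intro f he
        rw [← rule.idb_holds_iff_head_holds _ he, hO]
        exact ⟨fun h => ⟨h, by simp⟩, And.left⟩
    · have ha : a ∈ rule.idb := hO ▸ rfl
      rw [← derives_iff_derives_joinRel_head rule ω hedb ρ Q (joinAtom Q (a.map (Fin.natAdd r)))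
        (Nat.add_le_add_left (rule.idb_arity a ha) r) ?_, ← ih a ha (rule.idb_arity a ha)]
      · simp [joinAtom, Atom.map, Fin.comp_append]
      · intro f he
        rw [joinAtom_holds, ← rule.idb_holds_iff_head_holds _ he, hO]
        exact and_congr_right fun _ => ⟨fun h b hb => by cases hb; exact h, fun h => h a rfl⟩

theorem Derives.setOf_holds_iff (hr : 1 ≤ r) (ρ : Fin r → V) (a : Atom A r)
    (ha : a.arity ≤ r + s) :
    Derives 𝔸 (r + s) I ρ {q | a.holds q} ↔
      Derives 𝔸 (r + s) I (fun i => ρ (a.scope i)) a.rel := by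
  have h := Derives.iff_of_consistent (𝔸 := 𝔸) (I := I) (Fin.append ρ fun _ => ρ ⟨0, hr⟩)
    (prefixAtom s {q | a.holds q}) (a.map (Fin.castAdd s)) [] (Nat.le_add_right r s) ha
    (by simp) (fun _ _ => Iff.rfl)
  simpa [prefixAtom, Atom.map] using h

theorem Derives.inter_setOf_holds_iff (hr : 1 ≤ r) (hI : IsCSPInstance 𝔸 I) (ρ : Fin r → V)
    (Q : Set (Fin r → A)) (a : Atom A r) (ha : a.arity ≤ r + s)
    (h : Derives 𝔸 s I (fun i => ρ (a.scope i)) a.rel) :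
    Derives 𝔸 (r + s) I ρ (Q ∩ {q | a.holds q}) ↔ Derives 𝔸 (r + s) I ρ Q := by
  set ω : Fin (r + s) → V := Fin.append ρ fun _ => ρ ⟨0, hr⟩
  rcases h.mem_constraints_or_arity_le with hmem | has
  · have h' := Derives.iff_of_consistent (𝔸 := 𝔸) (I := I) ω
      (prefixAtom s (Q ∩ {q | a.holds q})) (prefixAtom s Q) [a.map (Fin.castAdd s)]
      (Nat.le_add_right r s) (Nat.le_add_right r s)
      (by simpa [Atom.map, Atom.constraintAt, ω] using And.intro ha (And.intro (hI _ hmem) hmem))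
      (fun f he => and_iff_left (he _ List.mem_cons_self))
    simpa [prefixAtom, ω] using h'
  · rw [← h.append_joinRel_iff hr hI has ρ Q]
    have h' := Derives.iff_of_consistent (𝔸 := 𝔸) (I := I) ω
      (prefixAtom s (Q ∩ {q | a.holds q})) (joinAtom Q (a.map (Fin.castAdd s))) []
      (Nat.le_add_right r s) (Nat.add_le_add_left has r) (by simp)
      (fun f _ => (joinAtom_holds Q (a.map (Fin.castAdd s)) f).symm)
    simpa [prefixAtom, joinAtom, Atom.map, Fin.comp_append, ω] using h'

theorem Derives.setOf_forall_holds_iff (hr : 1 ≤ r) (hI : IsCSPInstance 𝔸 I)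
    (ρ : Fin r → V) (l : List (Atom A r))
    (hl : ∀ a ∈ l, a.arity ≤ r ∧ Derives 𝔸 s I (fun i => ρ (a.scope i)) a.rel)
    (Q : Set (Fin r → A)) :
    Derives 𝔸 (r + s) I ρ {q | q ∈ Q ∧ ∀ a ∈ l, a.holds q} ↔ Derives 𝔸 (r + s) I ρ Q := by
  induction l generalizing Q with
  | nil => simp
  | cons a l ih =>
    have hQ : {q | q ∈ Q ∧ ∀ b ∈ a :: l, b.holds q} =
        {q | q ∈ Q ∩ {q | a.holds q} ∧ ∀ b ∈ l, b.holds q} := by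
      ext q
      simp [and_assoc]
    obtain ⟨ha, hder⟩ := hl a List.mem_cons_self
    rw [hQ, ih (fun b hb => hl b (List.mem_cons_of_mem a hb)),
      Derives.inter_setOf_holds_iff hr hI ρ Q a (ha.trans (Nat.le_add_right r s)) hder]

end Context

end Stacking

theorem Derives.of_derivesInstance {A V : Type} {𝔸 𝔹 : RelStruct A} {I J : Instance A V}
    {r s n : ℕ} {ρ : Fin n → V} {R : Set (Fin n → A)} (hr : 1 ≤ r) (hs : 1 ≤ s)
    (hI : IsCSPInstance 𝔸 I) (hIJ : DerivesInstance 𝔸 s I J) (h : Derives 𝔹 r J ρ R) :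
    Derives 𝔸 (r + s) I ρ R := by
  induction h with
  | base ρ R hmem => exact (hIJ _ hmem).mono hs (Nat.le_add_left s r)
  | step rule ω _ hedb ih =>
    have hedb' : ∀ e ∈ rule.edb, e.arity ≤ r ∧ Derives 𝔸 s I (fun i => ω (e.scope i)) e.rel :=
      fun e he => ⟨rule.edb_arity e he, hIJ _ (hedb e he)⟩
    have hidb : Derives 𝔸 (r + s) I ω {q | ∀ a ∈ rule.idb, a.holds q} := by
      rcases hO : rule.idb with _ | a
      · simpa [prefixAtom] using Derives.of_forall_holds (𝔸 := 𝔸) (I := I)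
          (Fin.append ω fun _ => ω ⟨0, hr⟩) (prefixAtom s (Set.univ : Set (Fin r → A)))
          (Nat.le_add_right r s) (fun _ => trivial)
      · have ha : a ∈ rule.idb := hO ▸ rfl
        simpa using (Derives.setOf_holds_iff hr ω a
          ((rule.idb_arity a ha).trans (Nat.le_add_right r s))).2 (ih a ha)
    have hhead : {q | q ∈ {q | ∀ a ∈ rule.idb, a.holds q} ∧ ∀ e ∈ rule.edb, e.holds q} =
        {q | q ∈ {q | rule.head.holds q} ∧ ∀ e ∈ rule.edb, e.holds q} := by
      ext q
      exact and_congr_left (rule.idb_holds_iff_head_holds q)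
    rw [← Derives.setOf_forall_holds_iff hr hI ω rule.edb hedb', hhead,
      Derives.setOf_forall_holds_iff hr hI ω rule.edb hedb'] at hidb
    exact (Derives.setOf_holds_iff hr ω rule.head
      (rule.head_arity.trans (Nat.le_add_right r s))).1 hidb

theorem statement2_general {A V : Type} (𝔸 𝔹 : RelStruct A)
    (I J : Instance A V)
    (hI : IsCSPInstance 𝔸 I)
    (r s : ℕ) (hr : 1 ≤ r) (hs : 1 ≤ s)
    (h1 : DerivesInstance 𝔸 s I J)
    (h2 : DerivesGoal 𝔹 r J) :
    DerivesGoal 𝔸 (r + s) I := by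
  obtain ⟨n, ρ, hn, h⟩ := h2
  exact ⟨n, ρ, hn.trans (Nat.le_add_right r s), h.of_derivesInstance hr hs hI h1⟩

/-- stacking symmetric Datalog programs.
Let `𝔸` and `𝔹` be relational structures on the same set `A`, `I` an instance
of `CSP(𝔸)`, `r, s` positive integers, and `J` an instance of `CSP(𝔹)` (on a
variable set `W ⊆ V`) with `𝒫_𝔸^s(I) ⊢ J` and `𝒫_𝔹^r(J) ⊢ G`.
Then `𝒫_𝔸^{r+s}(I) ⊢ G`. -/
theorem statement2 {A V : Type} [Finite A] (𝔸 𝔹 : RelStruct A)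
    (I J : Instance A V)
    (hI : IsCSPInstance 𝔸 I) (hJ : IsCSPInstance 𝔹 J)
    (r s : ℕ) (hr : 1 ≤ r) (hs : 1 ≤ s)
    (h1 : DerivesInstance 𝔸 s I J)
    (h2 : DerivesGoal 𝔹 r J) :
    DerivesGoal 𝔸 (r + s) I :=
  statement2_general 𝔸 𝔹 I J hI r s hr hs h1 h2

end CSPPaper
end

section
/- Let n ∈ ℕ, let I be a path instance of length ℓ over a set A whose constraint relations are all preserved by a chain of n Hagemann–Mitschke terms p_0, …, p_n on A, and let (s_0, s_1, …, s_n; i_1, …, i_n) be an n-braid in I. Define r_0 = s_0, r_n = s_n, and r_k(i) = p_k(s_{k−1}(i), s_k(i), s_{k+1}(i)) for 1 ≤ k ≤ n−1. Then each r_k is a solution of I, and r_{k−1}(i_k) = r_k(i_k) for every k = 1, …, n. -/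
namespace CSPPaper

/-- applying Hagemann–Mitschke terms to a braid.
With `r_0 = s_0`, `r_n = s_n` and
`r_k (i) = p_k (s_{k-1} (i), s_k (i), s_{k+1} (i))` for `1 ≤ k ≤ n-1`,
each `r_k` is a solution of `I` and `r_{k-1} (i_k) = r_k (i_k)` for
`k = 1, …, n`. -/
theorem statement6 {A : Type} (n : ℕ) (hn : 1 ≤ n) (I : PathInstance A)
    (p : ℕ → A → A → A → A) (hp : IsHMChain n p)
    (hB : ∀ k ≤ n, ∀ i, 1 ≤ i → i ≤ I.len → Pres3Set (p k) (I.B i))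
    (hE : ∀ k ≤ n, ∀ i, 1 ≤ i → i + 1 ≤ I.len → Pres3Rel (p k) (I.E i))
    (s : ℕ → ℕ → A) (idx : ℕ → ℕ)
    (hbraid : IsBraid I n s idx)
    (r : ℕ → ℕ → A)
    (hr0 : ∀ i, r 0 i = s 0 i)
    (hrn : ∀ i, r n i = s n i)
    (hrk : ∀ k, 1 ≤ k → k + 1 ≤ n → ∀ i,
      r k i = p k (s (k - 1) i) (s k i) (s (k + 1) i)) :
    (∀ k ≤ n, IsSolution I (r k)) ∧
    (∀ k, 1 ≤ k → k ≤ n → r (k - 1) (idx k) = r k (idx k)) := by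
  obtain ⟨hsol, _, _, _, hcons⟩ := hbraid
  obtain ⟨hidem, hp0, hpn, hchain⟩ := hp
  constructor
  · intro k hk
    rcases Nat.eq_zero_or_pos k with rfl | hk1
    · refine ⟨fun i h1 h2 => ?_, fun i h1 h2 => ?_⟩
      · rw [hr0]; exact (hsol 0 (Nat.zero_le n)).1 i h1 h2
      · rw [hr0, hr0]; exact (hsol 0 (Nat.zero_le n)).2 i h1 h2
    · rcases eq_or_lt_of_le hk with rfl | hlt
      · refine ⟨fun i h1 h2 => ?_, fun i h1 h2 => ?_⟩
        · rw [hrn]; exact (hsol k le_rfl).1 i h1 h2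
        · rw [hrn, hrn]; exact (hsol k le_rfl).2 i h1 h2
      · have hk2 : k + 1 ≤ n := hlt
        have hs1 := hsol (k - 1) (by omega)
        have hs2 := hsol k hk
        have hs3 := hsol (k + 1) hk2
        refine ⟨fun i h1 h2 => ?_, fun i h1 h2 => ?_⟩
        · rw [hrk k hk1 hk2]
          exact hB k hk i h1 h2 _ _ _ (hs1.1 i h1 h2) (hs2.1 i h1 h2) (hs3.1 i h1 h2)
        · rw [hrk k hk1 hk2 i, hrk k hk1 hk2 (i + 1)]
          exact hE k hk i h1 h2 (_, _) (_, _) (_, _)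
            (hs1.2 i h1 h2) (hs2.2 i h1 h2) (hs3.2 i h1 h2)
  · intro k hk1 hkn
    rcases eq_or_lt_of_le hn with hn1 | hn2
    · -- n = 1 : the HM chain forces A to be trivial
      subst hn1
      have triv : ∀ x y : A, x = y := by
        intro x y
        have h2 := hchain 0 (by omega) x y
        rw [hp0] at h2
        exact h2.trans (hpn x y y)
      exact triv _ _
    · rcases Nat.lt_or_ge k 2 with hklt | hkge
      · -- k = 1
        have hk : k = 1 := by omega
        subst hk
        show r 0 (idx 1) = r 1 (idx 1)
        set i := idx 1 with hi
        have g1 : r 0 i = s 0 i := hr0 i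
        have g2 : r 1 i = p 1 (s 0 i) (s 1 i) (s 2 i) := hrk 1 le_rfl (by omega) i
        have e2 : s 1 i = s 2 i := (hcons 1 le_rfl (by omega)).1
        rw [g1, g2, ← e2]
        exact (hp0 (s 0 i) (s 0 i) (s 1 i)).symm.trans (hchain 0 (by omega) _ _)
      · -- k ≥ 2
        obtain ⟨m, rfl⟩ : ∃ m, k = m + 2 := ⟨k - 2, by omega⟩
        show r (m + 1) (idx (m + 2)) = r (m + 2) (idx (m + 2))
        set i := idx (m + 2) with hi
        have e1 : s m i = s (m + 1) i := (hcons (m + 1) (by omega) (by omega)).2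
        have g1 : r (m + 1) i = p (m + 1) (s m i) (s (m + 1) i) (s (m + 2) i) :=
          hrk (m + 1) (by omega) (by omega) i
        rcases eq_or_lt_of_le hkn with hkn' | hkn'
        · -- k = n
          subst hkn'
          have g2 : r (m + 2) i = s (m + 2) i := hrn i
          rw [g1, g2, e1, hchain (m + 1) (by omega)]
          exact hpn _ _ _
        · -- k < n
          have g2 : r (m + 2) i = p (m + 2) (s (m + 1) i) (s (m + 2) i) (s (m + 3) i) :=
            hrk (m + 2) (by omega) (by omega) i
          have e2 : s (m + 2) i = s (m + 3) i := (hcons (m + 2) (by omega) (by omega)).1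
          rw [g1, g2, e1, ← e2, hchain (m + 1) (by omega)]

end CSPPaper
end

section
/- For every n and N there exists an m with the following property: if I is a subdirect path instance of length ℓ over a finite set A such that |B_i| ≤ N for each i ∈ [ℓ], then for any choice of indices 1 ≤ j_1 < j_2 < … < j_m < ℓ and edges e_q ∈ B_{j_q, j_q+1} ∩ (B_{j_q} × B_{j_q+1}) for q = 1, …, m, there exists an n-braid (s_0, …, s_n; i_1, …, i_n) in I such that for every k = 1, …, n−1 there is a q with i_k ≤ j_q < i_{k+1} and (s_k(j_q), s_k(j_q+1)) = e_q. -/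
namespace CSPPaper

----------------------------------------------------------------
-- DEV PART 1 : Reach infrastructure
----------------------------------------------------------------

variable {A : Type}

/-- Reachability by a partial solution. -/
def Reach (I : PathInstance A) (a : ℕ) (x : A) (b : ℕ) (y : A) : Prop :=
  a ≤ b ∧ ∃ s : ℕ → A, IsSolutionOn I a b s ∧ s a = x ∧ s b = y

lemma reach_refl {I : PathInstance A} {a : ℕ} {x : A} (hx : x ∈ I.B a) :
    Reach I a x a x := by
  refine ⟨le_refl a, fun _ => x, ⟨?_, ?_⟩, rfl, rfl⟩
  · intro i h1 h2
    have : i = a := le_antisymm h2 h1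
    subst this; exact hx
  · intro i h1 h2; omega

lemma reach_le {I : PathInstance A} {a b : ℕ} {x y : A} (h : Reach I a x b y) : a ≤ b := h.1

lemma reach_mem_left {I : PathInstance A} {a b : ℕ} {x y : A} (h : Reach I a x b y) :
    x ∈ I.B a := by
  obtain ⟨hab, s, hs, hsa, hsb⟩ := h
  rw [← hsa]; exact hs.1 a (le_refl a) hab

lemma reach_mem_right {I : PathInstance A} {a b : ℕ} {x y : A} (h : Reach I a x b y) :
    y ∈ I.B b := by
  obtain ⟨hab, s, hs, hsa, hsb⟩ := h
  rw [← hsb]; exact hs.1 b hab (le_refl b)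

lemma reach_edge {I : PathInstance A} {i : ℕ} {x y : A} (hx : x ∈ I.B i)
    (hy : y ∈ I.B (i + 1)) (he : (x, y) ∈ I.E i) : Reach I i x (i + 1) y := by
  refine ⟨Nat.le_succ i, fun t => if t ≤ i then x else y, ⟨?_, ?_⟩, by simp, by simp⟩
  · intro t h1 h2
    rcases Nat.lt_or_ge i t with h | h
    · have : t = i + 1 := by omega
      subst this
      simp only [if_neg (by omega : ¬ (i+1 ≤ i))]; exact hy
    · simp only [if_pos h]
      have : t = i := le_antisymm h h1
      subst this; exact hx
  · intro t h1 h2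
    have : t = i := by omega
    subst this
    simp only [if_pos (le_refl t), if_neg (by omega : ¬ (t+1 ≤ t))]
    exact he

/-- Gluing two partial solutions agreeing at the junction. -/
lemma glue_sols {I : PathInstance A} {a b c : ℕ} {s₁ s₂ : ℕ → A}
    (h1 : IsSolutionOn I a b s₁) (h2 : IsSolutionOn I b c s₂)
    (hab : a ≤ b) (hbc : b ≤ c) (heq : s₁ b = s₂ b) :
    ∃ s, IsSolutionOn I a c s ∧ (∀ i, i ≤ b → s i = s₁ i) ∧
      (∀ i, b ≤ i → s i = s₂ i) := by
  refine ⟨fun i => if i ≤ b then s₁ i else s₂ i, ⟨?_, ?_⟩, ?_, ?_⟩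
  · intro i hai hic
    by_cases h : i ≤ b
    · simp only [if_pos h]; exact h1.1 i hai h
    · simp only [if_neg h]; exact h2.1 i (by omega) hic
  · intro i hai hic
    by_cases h : i + 1 ≤ b
    · simp only [if_pos (by omega : i ≤ b), if_pos h]
      exact h1.2 i hai h
    · by_cases h' : i ≤ b
      · have hib : i = b := by omega
        subst hib
        simp only [if_pos (le_refl i), if_neg h, heq]
        exact h2.2 i (le_refl i) hic
      · simp only [if_neg h', if_neg h]
        exact h2.2 i (by omega) hic
  · intro i hi; simp [if_pos hi]
  · intro i hi
    by_cases h : i ≤ b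
    · have : i = b := le_antisymm h hi
      subst this; simp [heq]
    · simp [if_neg h]

lemma reach_trans {I : PathInstance A} {a b c : ℕ} {x y z : A}
    (h1 : Reach I a x b y) (h2 : Reach I b y c z) : Reach I a x c z := by
  obtain ⟨hab, s₁, hs₁, e1a, e1b⟩ := h1
  obtain ⟨hbc, s₂, hs₂, e2b, e2c⟩ := h2
  obtain ⟨s, hs, hl, hr⟩ := glue_sols hs₁ hs₂ hab hbc (by rw [e1b, e2b])
  exact ⟨le_trans hab hbc, s, hs, by rw [hl a hab, e1a], by rw [hr c hbc, e2c]⟩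

lemma step_fwd {I : PathInstance A} (hsub : Subdirect I) {i : ℕ} {x : A}
    (h1 : 1 ≤ i) (h2 : i + 1 ≤ I.len) (hx : x ∈ I.B i) :
    ∃ y ∈ I.B (i + 1), Reach I i x (i + 1) y := by
  obtain ⟨y, hy, he⟩ := (hsub i h1 h2).2.2.1 x hx
  exact ⟨y, hy, reach_edge hx hy he⟩

lemma step_bwd {I : PathInstance A} (hsub : Subdirect I) {i : ℕ} {y : A}
    (h1 : 1 ≤ i) (h2 : i + 1 ≤ I.len) (hy : y ∈ I.B (i + 1)) :
    ∃ x ∈ I.B i, Reach I i x (i + 1) y := by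
  obtain ⟨x, hx, he⟩ := (hsub i h1 h2).2.2.2 y hy
  exact ⟨x, hx, reach_edge hx hy he⟩

lemma reach_fwd {I : PathInstance A} (hsub : Subdirect I) {a : ℕ} {x : A}
    (h1 : 1 ≤ a) (hx : x ∈ I.B a) :
    ∀ b, a ≤ b → b ≤ I.len → ∃ y ∈ I.B b, Reach I a x b y := by
  intro b hab
  induction b, hab using Nat.le_induction with
  | base => intro _; exact ⟨x, hx, reach_refl hx⟩
  | succ b hab ih =>
    intro hb1
    obtain ⟨y, hy, hr⟩ := ih (by omega)
    obtain ⟨z, hz, hr2⟩ := step_fwd hsub (by omega) hb1 hy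
    exact ⟨z, hz, reach_trans hr hr2⟩

lemma reach_bwd {I : PathInstance A} (hsub : Subdirect I) {a : ℕ}
    (h1 : 1 ≤ a) :
    ∀ b, a ≤ b → b ≤ I.len → ∀ y ∈ I.B b, ∃ x ∈ I.B a, Reach I a x b y := by
  intro b hab
  induction b, hab using Nat.le_induction with
  | base => intro _ y hy; exact ⟨y, hy, reach_refl hy⟩
  | succ b hab ih =>
    intro hb1 y hy
    obtain ⟨z, hz, hr2⟩ := step_bwd hsub (by omega) hb1 hy
    obtain ⟨x, hx, hr⟩ := ih (by omega) z hz
    exact ⟨x, hx, reach_trans hr hr2⟩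

/-- Extend a partial solution to the right end. -/
lemma extend_right {I : PathInstance A} (hsub : Subdirect I) {a b : ℕ} {s : ℕ → A}
    (h1 : 1 ≤ a) (hab : a ≤ b) (hb : b ≤ I.len) (hs : IsSolutionOn I a b s) :
    ∃ s', IsSolutionOn I a I.len s' ∧ ∀ i, a ≤ i → i ≤ b → s' i = s i := by
  have main : ∀ c, b ≤ c → c ≤ I.len →
      ∃ s', IsSolutionOn I a c s' ∧ ∀ i, a ≤ i → i ≤ b → s' i = s i := by
    intro c hbc
    induction c, hbc using Nat.le_induction with
    | base => exact fun _ => ⟨s, hs, fun _ _ _ => rfl⟩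
    | succ c hbc ih =>
      intro hc1
      obtain ⟨s', hs', hagree⟩ := ih (by omega)
      have hmem : s' c ∈ I.B c := hs'.1 c (by omega) (le_refl c)
      obtain ⟨y, hy, hr⟩ := step_fwd hsub (by omega) hc1 hmem
      obtain ⟨_, σ, hσ, hσc, _⟩ := hr
      obtain ⟨s'', hs'', hl, _⟩ := glue_sols hs' hσ (by omega) (by omega) (by rw [hσc])
      exact ⟨s'', hs'', fun i hai hib => by rw [hl i (by omega), hagree i hai hib]⟩
  exact main I.len hb (le_refl _)

/-- Extend a partial solution to the left down to 1. -/
lemma extend_left {I : PathInstance A} (hsub : Subdirect I) {a b : ℕ} {s : ℕ → A}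
    (h1 : 1 ≤ a) (hab : a ≤ b) (hb : b ≤ I.len) (hs : IsSolutionOn I a b s) :
    ∃ s', IsSolutionOn I 1 b s' ∧ ∀ i, a ≤ i → i ≤ b → s' i = s i := by
  have main : ∀ d, d ≤ a - 1 →
      ∃ s', IsSolutionOn I (a - d) b s' ∧ ∀ i, a ≤ i → i ≤ b → s' i = s i := by
    intro d
    induction d with
    | zero => exact fun _ => ⟨s, by simpa using hs, fun _ _ _ => rfl⟩
    | succ d ih =>
      intro hd
      obtain ⟨s', hs', hagree⟩ := ih (by omega)
      have hmem : s' (a - d) ∈ I.B (a - d) := hs'.1 _ (le_refl _) (by omega)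
      have hstep : a - (d+1) + 1 = a - d := by omega
      obtain ⟨x, hx, hr⟩ := step_bwd hsub (i := a - (d+1)) (by omega)
          (by omega : a - (d+1) + 1 ≤ I.len) (by rw [hstep]; exact hmem)
      obtain ⟨_, σ, hσ, hσl, hσr⟩ := hr
      obtain ⟨s'', hs'', _, hr2⟩ := glue_sols (b := a - d) (by rw [← hstep]; exact hσ) hs'
        (by omega) (by omega) (by simpa only [hstep] using hσr)
      exact ⟨s'', hs'', fun i hai hib => by rw [hr2 i (by omega), hagree i hai hib]⟩
  obtain ⟨s', hs', hagree⟩ := main (a - 1) (le_refl _)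
  have : a - (a - 1) = 1 := by omega
  rw [this] at hs'
  exact ⟨s', hs', hagree⟩

/-- Extend a partial solution to a full solution. -/
lemma extend_full {I : PathInstance A} (hsub : Subdirect I) {a b : ℕ} {s : ℕ → A}
    (h1 : 1 ≤ a) (hab : a ≤ b) (hb : b ≤ I.len) (hs : IsSolutionOn I a b s) :
    ∃ s', IsSolution I s' ∧ ∀ i, a ≤ i → i ≤ b → s' i = s i := by
  obtain ⟨s₁, hs₁, hag₁⟩ := extend_right hsub h1 hab hb hs
  obtain ⟨s₂, hs₂, hag₂⟩ := extend_left hsub h1 (le_trans hab hb) (le_refl _) hs₁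
  exact ⟨s₂, hs₂, fun i hai hib => by
    rw [hag₂ i hai (le_trans hib hb), hag₁ i hai hib]⟩

/-- Concatenate a chain of reaches into one partial solution hitting all markers. -/
lemma chain_sol {I : PathInstance A} {p : ℕ → ℕ} {v : ℕ → A}
    (hmem : v 1 ∈ I.B (p 1)) :
    ∀ r, 1 ≤ r → (∀ t, 1 ≤ t → t < r → Reach I (p t) (v t) (p (t+1)) (v (t+1))) →
    ∃ s, IsSolutionOn I (p 1) (p r) s ∧ ∀ t, 1 ≤ t → t ≤ r → s (p t) = v t := by
  intro r hr
  induction r, hr using Nat.le_induction with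
  | base =>
    intro _
    refine ⟨fun _ => v 1, ⟨?_, ?_⟩, ?_⟩
    · intro i hi1 hi2
      have : i = p 1 := le_antisymm hi2 hi1
      subst this; exact hmem
    · intro i h1 h2; omega
    · intro t ht1 ht2
      have : t = 1 := le_antisymm ht2 ht1
      subst this; rfl
  | succ r hr ih =>
    intro hre
    obtain ⟨s, hs, hval⟩ := ih (fun t h1 h2 => hre t h1 (by omega))
    have hmono : ∀ t t', 1 ≤ t → t ≤ t' → t' ≤ r + 1 → p t ≤ p t' := by
      intro t t' ht htt'
      induction t', htt' using Nat.le_induction with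
      | base => intro _; exact le_refl _
      | succ t' htt' ih2 =>
        intro h
        exact le_trans (ih2 (by omega)) (hre t' (by omega) (by omega)).1
    obtain ⟨hler, σ, hσ, hσl, hσr⟩ := hre r (by omega) (by omega)
    have heq : s (p r) = σ (p r) := by rw [hσl, hval r (by omega) (le_refl _)]
    obtain ⟨s'', hs'', hl, hr2⟩ := glue_sols hs hσ (hmono 1 r (le_refl _) hr (by omega)) hler heq
    refine ⟨s'', hs'', ?_⟩
    intro t ht1 ht2
    rcases Nat.lt_or_ge t (r+1) with h | h
    · rw [hl (p t) (hmono t r ht1 (by omega) (by omega)), hval t ht1 (by omega)]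
    · have : t = r + 1 := by omega
      subst this
      rw [hr2 (p (r+1)) hler, hσr]



lemma steps_mono {p : ℕ → ℕ} {r : ℕ} (h : ∀ t, 1 ≤ t → t < r → p t ≤ p (t+1)) :
    ∀ t t', 1 ≤ t → t ≤ t' → t' ≤ r → p t ≤ p t' := by
  intro t t' ht htt'
  induction t', htt' using Nat.le_induction with
  | base => intro _; exact le_refl _
  | succ t' htt' ih =>
    intro h2
    exact le_trans (ih (by omega)) (h t' (by omega) (by omega))

noncomputable def boolOf (P : Prop) : Bool := @decide P (Classical.propDecidable P)

lemma boolOf_iff {P : Prop} : boolOf P = true ↔ P := by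
  unfold boolOf
  exact @decide_eq_true_iff P (Classical.propDecidable P)

lemma fiber_pigeonhole {γ : Type} [Fintype γ] [DecidableEq γ] (S : Finset ℕ)
    (g : ℕ → γ) (L : ℕ) (h : Fintype.card γ * L < S.card) :
    ∃ c, L < (S.filter (fun q => g q = c)).card := by
  by_contra hcon
  push_neg at hcon
  have hsum : S.card = ∑ c ∈ Finset.univ, (S.filter (fun q => g q = c)).card :=
    Finset.card_eq_sum_card_fiberwise (fun x _ => Finset.mem_univ (g x))
  have hle : ∑ c ∈ (Finset.univ : Finset γ), (S.filter (fun q => g q = c)).card ≤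
      Fintype.card γ * L := by
    calc ∑ c ∈ Finset.univ, (S.filter (fun q => g q = c)).card
        ≤ (Finset.univ : Finset γ).card • L :=
          Finset.sum_le_card_nsmul _ _ _ (fun c _ => hcon c)
      _ = Fintype.card γ * L := by rw [smul_eq_mul, Finset.card_univ]
  omega

lemma extract {γ : Type} [Fintype γ] [DecidableEq γ] [Nonempty γ] (f : ℕ → ℕ → γ) :
    ∀ (K : ℕ) (S : Finset ℕ), (Fintype.card γ + 1)^K ≤ S.card →
    ∃ (x : ℕ → ℕ) (cc : ℕ → γ), (∀ t, t < K → x t ∈ S) ∧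
      (∀ t t', t < t' → t' < K → x t < x t') ∧
      (∀ t t', t < t' → t' < K → f (x t) (x t') = cc t) := by
  intro K
  induction K with
  | zero =>
    intro S _
    exact ⟨id, fun _ => Classical.arbitrary γ, fun t ht => absurd ht (by omega),
      fun t t' h h' => absurd h' (by omega), fun t t' h h' => absurd h' (by omega)⟩
  | succ K ih =>
    intro S hS
    set Q := Fintype.card γ with hQ
    have hpos : 0 < S.card := lt_of_lt_of_le (by positivity) hS
    have hne : S.Nonempty := Finset.card_pos.mp hpos
    set x₀ := S.min' hne with hx₀
    set S' := S.erase x₀ with hS'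
    have hcard' : S.card - 1 ≤ S'.card := by
      rw [hS', Finset.card_erase_of_mem (S.min'_mem hne)]
    have hQpos : 0 < Q := Fintype.card_pos
    have hbig : Q * ((Q+1)^K - 1) < S'.card := by
      have h1 : (Q+1)^(K+1) = Q * (Q+1)^K + (Q+1)^K := by ring
      have h2 : 1 ≤ (Q+1)^K := Nat.one_le_pow _ _ (by omega)
      have h3 : Q * ((Q+1)^K - 1) + Q * 1 = Q * (Q+1)^K := by
        rw [← Nat.mul_add]; congr 1; omega
      omega
    obtain ⟨c, hc⟩ := fiber_pigeonhole S' (fun q => f x₀ q) ((Q+1)^K - 1) hbig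
    set Sc := S'.filter (fun q => f x₀ q = c) with hSc
    have hScard : (Q+1)^K ≤ Sc.card := by
      have h2 : 1 ≤ (Q+1)^K := Nat.one_le_pow _ _ (by omega)
      omega
    obtain ⟨x', cc', hmem', hmono', hcol'⟩ := ih Sc hScard
    refine ⟨fun t => match t with | 0 => x₀ | (t+1) => x' t,
            fun t => match t with | 0 => c | (t+1) => cc' t, ?_, ?_, ?_⟩
    · intro t ht
      match t with
      | 0 => exact S.min'_mem hne
      | (t+1) =>
        have := hmem' t (by omega)
        exact Finset.mem_of_mem_erase (Finset.mem_of_mem_filter _ this)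
    · intro t t' h h'
      match t, t' with
      | _, 0 => omega
      | 0, (t'+1) =>
        show x₀ < x' t'
        have hmem := hmem' t' (by omega)
        have h1 : x' t' ∈ S' := Finset.mem_of_mem_filter _ hmem
        have h2 : x' t' ≠ x₀ := Finset.ne_of_mem_erase h1
        have h3 : x₀ ≤ x' t' := S.min'_le _ (Finset.mem_of_mem_erase h1)
        omega
      | (t+1), (t'+1) => exact hmono' t t' (by omega) (by omega)
    · intro t t' h h'
      match t, t' with
      | _, 0 => omega
      | 0, (t'+1) =>
        show f x₀ (x' t') = c
        have hmem := hmem' t' (by omega)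
        exact (Finset.mem_filter.mp hmem).2
      | (t+1), (t'+1) => exact hcol' t t' (by omega) (by omega)

/-- Ramsey theorem for pairs, on the interval `[1, M]`. -/
lemma ramsey_pairs {γ : Type} [Fintype γ] [DecidableEq γ] [Nonempty γ] (T : ℕ)
    (hT : 1 ≤ T) :
    ∃ M, 1 ≤ M ∧ ∀ f : ℕ → ℕ → γ, ∃ (g : ℕ → ℕ) (c : γ),
      (∀ t, 1 ≤ t → t ≤ T → 1 ≤ g t ∧ g t ≤ M) ∧
      (∀ t t', 1 ≤ t → t < t' → t' ≤ T → g t < g t') ∧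
      (∀ t t', 1 ≤ t → t < t' → t' ≤ T → f (g t) (g t') = c) := by
  classical
  set Q := Fintype.card γ with hQ
  have hQpos : 0 < Q := Fintype.card_pos
  set K := Q * T + 1 with hK
  set M := (Q + 1)^K with hM
  have hM1 : 1 ≤ M := Nat.one_le_pow _ _ (by omega)
  refine ⟨M, hM1, ?_⟩
  intro f
  have hcard : (Q+1)^K ≤ (Finset.Icc 1 M).card := by
    rw [Nat.card_Icc]; omega
  obtain ⟨x, cc, hmem, hmono, hcol⟩ := extract f K (Finset.Icc 1 M) hcard
  -- pigeonhole on the tags cc over range (K-1)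
  have hbig : Q * (T - 1) < (Finset.range (K-1)).card := by
    rw [Finset.card_range]
    have : Q * (T-1) + Q ≤ Q * T := by nlinarith [Nat.sub_add_cancel hT]
    omega
  obtain ⟨c, hc⟩ := fiber_pigeonhole (Finset.range (K-1)) cc (T-1) hbig
  set F := (Finset.range (K-1)).filter (fun q => cc q = c) with hF
  have hFcard : T ≤ F.card := by omega
  set emb := F.orderEmbOfCardLe hFcard with hemb
  have hembmem : ∀ i : Fin T, emb i ∈ F := fun i => F.orderEmbOfCardLe_mem hFcard i
  refine ⟨fun t => if h : t - 1 < T then x (emb ⟨t - 1, h⟩) else 1, c, ?_, ?_, ?_⟩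
  · intro t ht1 ht2
    have h : t - 1 < T := by omega
    simp only [dif_pos h]
    have hm := hmem (emb ⟨t-1, h⟩) (by
      have := hembmem ⟨t-1, h⟩
      have := Finset.mem_range.mp (Finset.mem_of_mem_filter _ this)
      omega)
    rw [Finset.mem_Icc] at hm
    exact hm
  · intro t t' ht1 htt' ht2
    have h : t - 1 < T := by omega
    have h' : t' - 1 < T := by omega
    simp only [dif_pos h, dif_pos h']
    have he : emb ⟨t-1, h⟩ < emb ⟨t'-1, h'⟩ := by
      apply emb.strictMono
      show (⟨t-1, h⟩ : Fin T) < ⟨t'-1, h'⟩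
      simp [Fin.lt_def]; omega
    apply hmono _ _ he
    have := hembmem ⟨t'-1, h'⟩
    have := Finset.mem_range.mp (Finset.mem_of_mem_filter _ this)
    omega
  · intro t t' ht1 htt' ht2
    have h : t - 1 < T := by omega
    have h' : t' - 1 < T := by omega
    simp only [dif_pos h, dif_pos h']
    have he : emb ⟨t-1, h⟩ < emb ⟨t'-1, h'⟩ := by
      apply emb.strictMono
      show (⟨t-1, h⟩ : Fin T) < ⟨t'-1, h'⟩
      simp [Fin.lt_def]; omega
    have hlt : emb ⟨t'-1, h'⟩ < K := by
      have := hembmem ⟨t'-1, h'⟩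
      have := Finset.mem_range.mp (Finset.mem_of_mem_filter _ this)
      omega
    rw [hcol _ _ he hlt]
    have := hembmem ⟨t-1, h⟩
    exact (Finset.mem_filter.mp this).2

/-- Recurrent element for a transitive relation with backward steps on a finite set. -/
lemma exists_recurrent {X : Type} [Finite X] (D : Set X) (R : X → X → Prop)
    (htrans : ∀ a b c, R a b → R b c → R a c)
    (hstep : ∀ x ∈ D, ∃ y ∈ D, R y x) (x₀ : X) (hx₀ : x₀ ∈ D) :
    ∃ x ∈ D, R x x ∧ (x = x₀ ∨ R x x₀) := by
  classical
  -- set of elements of D connected to x₀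
  set D' : Set X := {x | x ∈ D ∧ (x = x₀ ∨ R x x₀)} with hD'
  have hstep' : ∀ x ∈ D', ∃ y ∈ D', R y x := by
    rintro x ⟨hxD, hx⟩
    obtain ⟨y, hyD, hR⟩ := hstep x hxD
    refine ⟨y, ⟨hyD, ?_⟩, hR⟩
    rcases hx with h | h
    · right; rw [← h]; exact hR
    · right; exact htrans _ _ _ hR h
  have hchoice : ∀ x : {z // z ∈ D'}, ∃ y : {z // z ∈ D'}, R y.1 x.1 := by
    intro x
    obtain ⟨y, hy, hR⟩ := hstep' x.1 x.2
    exact ⟨⟨y, hy⟩, hR⟩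
  choose nx hnx using hchoice
  have hx₀' : x₀ ∈ D' := ⟨hx₀, Or.inl rfl⟩
  let seq : ℕ → {z // z ∈ D'} := fun t => Nat.rec ⟨x₀, hx₀'⟩ (fun _ p => nx p) t
  have hseq : ∀ t, R (seq (t+1)).1 (seq t).1 := fun t => hnx (seq t)
  have hchain : ∀ a b, a < b → R (seq b).1 (seq a).1 := by
    intro a b hab
    induction b with
    | zero => omega
    | succ b ih =>
      rcases Nat.lt_or_ge a b with h | h
      · exact htrans _ _ _ (hseq b) (ih h)
      · have : a = b := by omega
        subst this; exact hseq a
  have : ∃ (a b : ℕ), a ≠ b ∧ seq a = seq b := by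
    have := Finite.exists_ne_map_eq_of_infinite seq
    exact this
  obtain ⟨a, b, hne, heq⟩ := this
  rcases Nat.lt_or_ge a b with h | h
  · refine ⟨(seq a).1, (seq a).2.1, ?_, (seq a).2.2⟩
    have h2 := hchain a b h
    rw [← heq] at h2; exact h2
  · have h' : b < a := by omega
    refine ⟨(seq b).1, (seq b).2.1, ?_, (seq b).2.2⟩
    have h2 := hchain b a h'
    rw [heq] at h2; exact h2



/-- braids through prescribed edges; a Ramsey-type lemma.
For every `n` and `N` there is an `m` such that: in every subdirect path
instance `I` over a finite set, with `|B_i| ≤ N`, for every choice of indices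
`1 ≤ j_1 < … < j_m < len` and edges `e_q ∈ B_{j_q,j_q+1} ∩ (B_{j_q} × B_{j_q+1})`
there is an `n`-braid `(s_0, …, s_n; i_1, …, i_n)` such that for every
`k = 1, …, n-1` there is a `q` with `i_k ≤ j_q < i_{k+1}` and
`(s_k (j_q), s_k (j_q + 1)) = e_q`. -/
theorem statement7 (n N : ℕ) :
    ∃ m : ℕ, ∀ (A : Type), Finite A → ∀ I : PathInstance A,
      Subdirect I →
      (∀ i, 1 ≤ i → i ≤ I.len → (I.B i).ncard ≤ N) →
      ∀ (j : ℕ → ℕ) (e : ℕ → A × A),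
        1 ≤ j 1 →
        (∀ q, 1 ≤ q → q < m → j q < j (q + 1)) →
        j m < I.len →
        (∀ q, 1 ≤ q → q ≤ m →
          e q ∈ I.E (j q) ∧ (e q).1 ∈ I.B (j q) ∧ (e q).2 ∈ I.B (j q + 1)) →
        ∃ (s : ℕ → ℕ → A) (idx : ℕ → ℕ),
          IsBraid I n s idx ∧
          ∀ k, 1 ≤ k → k + 1 ≤ n →
            ∃ q, 1 ≤ q ∧ q ≤ m ∧ idx k ≤ j q ∧ j q < idx (k + 1) ∧
              (s k (j q), s k (j q + 1)) = e q := by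
  classical
  obtain ⟨M, hM1, hram⟩ := ramsey_pairs
    (γ := (Fin N × Fin N → Bool) × (Fin N → Bool) × (Fin N → Bool) ×
          (Fin N → Bool) × (Fin N → Bool)) (2*n+4) (by omega)
  refine ⟨M, ?_⟩
  intro A hfin I hsub hBcard j e hj1 hjmono hjm he
  haveI : Finite A := hfin
  have hlen1 : 1 ≤ I.len := by omega
  -- monotonicity facts for j on [1, M]
  have hjle : ∀ a b, 1 ≤ a → a ≤ b → b ≤ M → j a ≤ j b := by
    intro a b ha hab
    induction b, hab using Nat.le_induction with
    | base => intro _; exact le_refl _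
    | succ b hab ih =>
      intro hb
      exact le_trans (ih (by omega)) (le_of_lt (hjmono b (by omega) (by omega)))
  have hjlt : ∀ a b, 1 ≤ a → a < b → b ≤ M → j a < j b := by
    intro a b ha hab hb
    exact lt_of_lt_of_le (hjmono a ha (by omega)) (hjle (a+1) b (by omega) hab hb)
  have hjtop : ∀ q, 1 ≤ q → q ≤ M → j q < I.len :=
    fun q h1 h2 => lt_of_le_of_lt (hjle q M h1 h2 (le_refl _)) hjm
  have hjbot : ∀ q, 1 ≤ q → q ≤ M → 1 ≤ j q :=
    fun q h1 h2 => le_trans hj1 (hjle 1 q (le_refl _) h1 h2)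
  -- a solution through the first edge (used in degenerate cases)
  have he1 := he 1 (le_refl _) hM1
  obtain ⟨sol₀, hsol₀, _⟩ := extend_full hsub (hjbot 1 (le_refl _) hM1)
    (Nat.le_succ _) (hjtop 1 (le_refl _) hM1)
    (reach_edge he1.2.1 he1.2.2 he1.1).2.choose_spec.1
  by_cases hn : n ≤ 1
  · -- degenerate braid
    refine ⟨fun _ => sol₀, fun _ => j 1, ⟨fun _ _ => hsol₀, hj1,
      le_of_lt (hjtop 1 (le_refl _) hM1), fun k h1 h2 => by omega,
      fun k h1 h2 => by omega⟩, fun k h1 h2 => by omega⟩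
  -- main case : n ≥ 2
  push_neg at hn
  have hN1 : 1 ≤ N := by
    by_contra hN0
    have hfinB : (I.B (j 1)).Finite := Set.toFinite _
    have : 0 < (I.B (j 1)).ncard := (Set.ncard_pos (Set.toFinite _)).mpr ⟨(e 1).1, he1.2.1⟩
    have := hBcard (j 1) (hjbot 1 (le_refl _) hM1) (le_of_lt (hjtop 1 (le_refl _) hM1))
    omega
  -- labels
  have hlab : ∀ q : ℕ, ∃ c : A → Fin N,
      (1 ≤ j q → j q ≤ I.len → Set.InjOn c (I.B (j q))) := by
    intro q
    haveI := Fintype.ofFinite A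
    by_cases hq : 1 ≤ j q ∧ j q ≤ I.len
    · have hcard : Fintype.card (I.B (j q)) ≤ N := by
        have h1 : (I.B (j q)).ncard = Fintype.card (I.B (j q)) := by
          rw [Set.ncard_eq_toFinset_card', Set.toFinset_card]
        rw [← h1]; exact hBcard _ hq.1 hq.2
      let emb : (I.B (j q)) ↪ Fin N :=
        (Fintype.equivFin (I.B (j q))).toEmbedding.trans (Fin.castLEEmb hcard)
      refine ⟨fun a => if h : a ∈ I.B (j q) then emb ⟨a, h⟩ else ⟨0, hN1⟩, ?_⟩
      intro _ _
      intro x hx y hy hxy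
      simp only [dif_pos hx, dif_pos hy] at hxy
      have h2 := emb.injective hxy
      exact congrArg Subtype.val h2
    · exact ⟨fun _ => ⟨0, hN1⟩, fun h1 h2 => absurd ⟨h1, h2⟩ hq⟩
  choose cl hcl using hlab
  -- apply Ramsey to the reachability coloring
  obtain ⟨g, c₀, hgmem, hgmono, hgcol⟩ := hram (fun q q' =>
    (fun lm => boolOf (∃ x y : A, x ∈ I.B (j q) ∧ y ∈ I.B (j q') ∧
        cl q x = lm.1 ∧ cl q' y = lm.2 ∧ Reach I (j q) x (j q') y),
     fun mu => boolOf (∃ y : A, y ∈ I.B (j q') ∧ cl q' y = mu ∧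
        Reach I (j q + 1) (e q).2 (j q') y),
     fun la => boolOf (∃ x : A, x ∈ I.B (j q) ∧ cl q x = la ∧
        Reach I (j q) x (j q') (e q').1),
     fun la => boolOf (∃ x : A, x ∈ I.B (j q) ∧ cl q x = la),
     fun mu => boolOf (∃ y : A, y ∈ I.B (j q') ∧ cl q' y = mu)))
  have hgbot : ∀ t, 1 ≤ t → t ≤ 2*n+4 → 1 ≤ j (g t) :=
    fun t h1 h2 => hjbot _ (hgmem t h1 h2).1 (hgmem t h1 h2).2
  have hgtop : ∀ t, 1 ≤ t → t ≤ 2*n+4 → j (g t) < I.len :=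
    fun t h1 h2 => hjtop _ (hgmem t h1 h2).1 (hgmem t h1 h2).2
  have hglt : ∀ t t', 1 ≤ t → t < t' → t' ≤ 2*n+4 → j (g t) < j (g t') :=
    fun t t' h1 h2 h3 => hjlt _ _ (hgmem t h1 (by omega)).1 (hgmono t t' h1 h2 h3)
      (hgmem t' (by omega) h3).2
  have hicl : ∀ t, 1 ≤ t → t ≤ 2*n+4 → Set.InjOn (cl (g t)) (I.B (j (g t))) :=
    fun t h1 h2 => hcl (g t) (hgbot t h1 h2) (le_of_lt (hgtop t h1 h2))
  -- semantic bridges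
  have hRiff : ∀ t t', 1 ≤ t → t < t' → t' ≤ 2*n+4 → ∀ la mu : Fin N,
      (c₀.1 (la, mu) = true ↔ ∃ x y : A, x ∈ I.B (j (g t)) ∧ y ∈ I.B (j (g t')) ∧
        cl (g t) x = la ∧ cl (g t') y = mu ∧ Reach I (j (g t)) x (j (g t')) y) := by
    intro t t' h1 h2 h3 la mu
    rw [← hgcol t t' h1 h2 h3]
    exact boolOf_iff
  have hUiff : ∀ t t', 1 ≤ t → t < t' → t' ≤ 2*n+4 → ∀ mu : Fin N,
      (c₀.2.1 mu = true ↔ ∃ y : A, y ∈ I.B (j (g t')) ∧ cl (g t') y = mu ∧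
        Reach I (j (g t) + 1) (e (g t)).2 (j (g t')) y) := by
    intro t t' h1 h2 h3 mu
    rw [← hgcol t t' h1 h2 h3]
    exact boolOf_iff
  have hViff : ∀ t t', 1 ≤ t → t < t' → t' ≤ 2*n+4 → ∀ la : Fin N,
      (c₀.2.2.1 la = true ↔ ∃ x : A, x ∈ I.B (j (g t)) ∧ cl (g t) x = la ∧
        Reach I (j (g t)) x (j (g t')) (e (g t')).1) := by
    intro t t' h1 h2 h3 la
    rw [← hgcol t t' h1 h2 h3]
    exact boolOf_iff
  have hLiff : ∀ t t', 1 ≤ t → t < t' → t' ≤ 2*n+4 → ∀ la : Fin N,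
      (c₀.2.2.2.1 la = true ↔ ∃ x : A, x ∈ I.B (j (g t)) ∧ cl (g t) x = la) := by
    intro t t' h1 h2 h3 la
    rw [← hgcol t t' h1 h2 h3]
    exact boolOf_iff
  have hRRiff : ∀ t t', 1 ≤ t → t < t' → t' ≤ 2*n+4 → ∀ mu : Fin N,
      (c₀.2.2.2.2 mu = true ↔ ∃ y : A, y ∈ I.B (j (g t')) ∧ cl (g t') y = mu) := by
    intro t t' h1 h2 h3 mu
    rw [← hgcol t t' h1 h2 h3]
    exact boolOf_iff
  -- abstract consequences of monochromaticity
  have hLR : ∀ la : Fin N, (c₀.2.2.2.2 la = true) → (c₀.2.2.2.1 la = true) := by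
    intro la h
    obtain ⟨y, hy, hyl⟩ := (hRRiff 1 2 (by omega) (by omega) (by omega) la).mp h
    exact (hLiff 2 3 (by omega) (by omega) (by omega) la).mpr ⟨y, hy, hyl⟩
  have htrans : ∀ a b c : Fin N, c₀.1 (a, b) = true → c₀.1 (b, c) = true →
      c₀.1 (a, c) = true := by
    intro a b c hab hbc
    obtain ⟨x, y, hx, hy, hxl, hyl, hr1⟩ :=
      (hRiff 1 2 (by omega) (by omega) (by omega) a b).mp hab
    obtain ⟨x', y', hx', hy', hxl', hyl', hr2⟩ :=
      (hRiff 2 3 (by omega) (by omega) (by omega) b c).mp hbc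
    have hxy : y = x' := hicl 2 (by omega) (by omega) hy hx' (by rw [hyl, hxl'])
    rw [hxy] at hr1
    exact (hRiff 1 3 (by omega) (by omega) (by omega) a c).mpr
      ⟨x, y', hx, hy', hxl, hyl', reach_trans hr1 hr2⟩
  have hVcl : ∀ la mu : Fin N, c₀.1 (la, mu) = true → c₀.2.2.1 mu = true →
      c₀.2.2.1 la = true := by
    intro la mu hab hv
    obtain ⟨x, y, hx, hy, hxl, hyl, hr1⟩ :=
      (hRiff 1 2 (by omega) (by omega) (by omega) la mu).mp hab
    obtain ⟨x', hx', hxl', hr2⟩ :=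
      (hViff 2 3 (by omega) (by omega) (by omega) mu).mp hv
    have hxy : y = x' := hicl 2 (by omega) (by omega) hy hx' (by rw [hyl, hxl'])
    rw [hxy] at hr1
    exact (hViff 1 3 (by omega) (by omega) (by omega) la).mpr
      ⟨x, hx, hxl, reach_trans hr1 hr2⟩
  have hUcl : ∀ mu nu : Fin N, c₀.2.1 mu = true → c₀.1 (mu, nu) = true →
      c₀.2.1 nu = true := by
    intro mu nu hu hab
    obtain ⟨y, hy, hyl, hr1⟩ :=
      (hUiff 1 2 (by omega) (by omega) (by omega) mu).mp hu
    obtain ⟨x', y', hx', hy', hxl', hyl', hr2⟩ :=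
      (hRiff 2 3 (by omega) (by omega) (by omega) mu nu).mp hab
    have hxy : y = x' := hicl 2 (by omega) (by omega) hy hx' (by rw [hyl, hxl'])
    rw [hxy] at hr1
    exact (hUiff 1 3 (by omega) (by omega) (by omega) nu).mpr
      ⟨y', hy', hyl', reach_trans hr1 hr2⟩
  have hbt : ∀ mu : Fin N, c₀.2.2.2.1 mu = true →
      ∃ la, c₀.2.2.2.1 la = true ∧ c₀.1 (la, mu) = true := by
    intro mu h
    obtain ⟨y, hy, hyl⟩ := (hLiff 2 3 (by omega) (by omega) (by omega) mu).mp h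
    obtain ⟨x, hx, hr⟩ := reach_bwd hsub (hgbot 1 (by omega) (by omega)) (j (g 2))
      (le_of_lt (hglt 1 2 (by omega) (by omega) (by omega)))
      (le_of_lt (hgtop 2 (by omega) (by omega))) y hy
    refine ⟨cl (g 1) x, ?_, ?_⟩
    · exact (hLiff 1 2 (by omega) (by omega) (by omega) _).mpr ⟨x, hx, rfl⟩
    · exact (hRiff 1 2 (by omega) (by omega) (by omega) _ _).mpr
        ⟨x, y, hx, hy, rfl, hyl, hr⟩
  have hft : ∀ la : Fin N, c₀.2.2.2.1 la = true →
      ∃ mu, c₀.2.2.2.1 mu = true ∧ c₀.1 (la, mu) = true := by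
    intro la h
    obtain ⟨x, hx, hxl⟩ := (hLiff 1 2 (by omega) (by omega) (by omega) la).mp h
    obtain ⟨y, hy, hr⟩ := reach_fwd hsub (hgbot 1 (by omega) (by omega)) hx (j (g 2))
      (le_of_lt (hglt 1 2 (by omega) (by omega) (by omega)))
      (le_of_lt (hgtop 2 (by omega) (by omega)))
    refine ⟨cl (g 2) y, ?_, ?_⟩
    · exact (hLiff 2 3 (by omega) (by omega) (by omega) _).mpr ⟨y, hy, rfl⟩
    · exact (hRiff 1 2 (by omega) (by omega) (by omega) _ _).mpr
        ⟨x, y, hx, hy, hxl, rfl, hr⟩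
  have hV0 : ∃ la, c₀.2.2.2.1 la = true ∧ c₀.2.2.1 la = true := by
    have hmem : (e (g 2)).1 ∈ I.B (j (g 2)) :=
      (he (g 2) (hgmem 2 (by omega) (by omega)).1 (hgmem 2 (by omega) (by omega)).2).2.1
    obtain ⟨x, hx, hr⟩ := reach_bwd hsub (hgbot 1 (by omega) (by omega)) (j (g 2))
      (le_of_lt (hglt 1 2 (by omega) (by omega) (by omega)))
      (le_of_lt (hgtop 2 (by omega) (by omega))) _ hmem
    refine ⟨cl (g 1) x, ?_, ?_⟩
    · exact (hLiff 1 2 (by omega) (by omega) (by omega) _).mpr ⟨x, hx, rfl⟩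
    · exact (hViff 1 2 (by omega) (by omega) (by omega) _).mpr ⟨x, hx, rfl, hr⟩
  have hU0 : ∃ mu, c₀.2.2.2.1 mu = true ∧ c₀.2.1 mu = true := by
    have hmem : (e (g 1)).2 ∈ I.B (j (g 1) + 1) :=
      (he (g 1) (hgmem 1 (by omega) (by omega)).1 (hgmem 1 (by omega) (by omega)).2).2.2
    obtain ⟨y, hy, hr⟩ := reach_fwd hsub (a := j (g 1) + 1) (by omega) hmem (j (g 2))
      (hglt 1 2 (by omega) (by omega) (by omega))
      (le_of_lt (hgtop 2 (by omega) (by omega)))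
    refine ⟨cl (g 2) y, ?_, ?_⟩
    · exact hLR _ ((hRRiff 1 2 (by omega) (by omega) (by omega) _).mpr ⟨y, hy, rfl⟩)
    · exact (hUiff 1 2 (by omega) (by omega) (by omega) _).mpr ⟨y, hy, rfl, hr⟩
  -- recurrent labels
  obtain ⟨la0, hla0⟩ := hV0
  obtain ⟨eta, hetaD, hetaR, _⟩ := exists_recurrent
    {la : Fin N | c₀.2.2.2.1 la = true ∧ c₀.2.2.1 la = true}
    (fun a b => c₀.1 (a, b) = true) htrans
    (by
      rintro x ⟨hxL, hxV⟩
      obtain ⟨la, hlaL, hlaR⟩ := hbt x hxL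
      exact ⟨la, ⟨hlaL, hVcl la x hlaR hxV⟩, hlaR⟩)
    la0 ⟨hla0.1, hla0.2⟩
  obtain ⟨mu0, hmu0⟩ := hU0
  obtain ⟨om, homD, homR, _⟩ := exists_recurrent
    {mu : Fin N | c₀.2.2.2.1 mu = true ∧ c₀.2.1 mu = true}
    (fun a b => c₀.1 (b, a) = true)
    (fun a b c hab hbc => htrans c b a hbc hab)
    (by
      rintro x ⟨hxL, hxU⟩
      obtain ⟨mu, hmuL, hmuR⟩ := hft x hxL
      exact ⟨mu, ⟨hmuL, hUcl x mu hxU hmuR⟩, hmuR⟩)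
    mu0 ⟨hmu0.1, hmu0.2⟩
  have hetaL : c₀.2.2.2.1 eta = true := hetaD.1
  have hetaV : c₀.2.2.1 eta = true := hetaD.2
  have homL : c₀.2.2.2.1 om = true := homD.1
  have homU : c₀.2.1 om = true := homD.2
  -- markers
  have hYex : ∀ t : ℕ, ∃ x : A, (1 ≤ t → t ≤ n →
      x ∈ I.B (j (g (2*t-1))) ∧ cl (g (2*t-1)) x = eta) := by
    intro t
    by_cases ht : 1 ≤ t ∧ t ≤ n
    · obtain ⟨x, hx, hxl⟩ := (hLiff (2*t-1) (2*t) (by omega) (by omega)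
        (by omega) eta).mp hetaL
      exact ⟨x, fun _ _ => ⟨hx, hxl⟩⟩
    · exact ⟨(e 1).1, fun h1 h2 => absurd ⟨h1, h2⟩ ht⟩
  choose Y hY using hYex
  have hWex : ∀ t : ℕ, ∃ x : A, (1 ≤ t → t ≤ n →
      x ∈ I.B (j (g (2*t-1))) ∧ cl (g (2*t-1)) x = om) := by
    intro t
    by_cases ht : 1 ≤ t ∧ t ≤ n
    · obtain ⟨x, hx, hxl⟩ := (hLiff (2*t-1) (2*t) (by omega) (by omega)
        (by omega) om).mp homL
      exact ⟨x, fun _ _ => ⟨hx, hxl⟩⟩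
    · exact ⟨(e 1).1, fun h1 h2 => absurd ⟨h1, h2⟩ ht⟩
  choose W hW using hWex
  -- reach facts between markers
  have hYY : ∀ t, 1 ≤ t → t + 1 ≤ n →
      Reach I (j (g (2*t-1))) (Y t) (j (g (2*t+1))) (Y (t+1)) := by
    intro t h1 h2
    obtain ⟨x, y, hx, hy, hxl, hyl, hr⟩ := (hRiff (2*t-1) (2*t+1) (by omega)
      (by omega) (by omega) eta eta).mp hetaR
    have e1 : 2*(t+1)-1 = 2*t+1 := by omega
    have hYt := hY t h1 (by omega)
    have hYt1 := hY (t+1) (by omega) h2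
    rw [e1] at hYt1
    have hx' : x = Y t := hicl (2*t-1) (by omega) (by omega) hx hYt.1
      (by rw [hxl, hYt.2])
    have hy' : y = Y (t+1) := hicl (2*t+1) (by omega) (by omega) hy hYt1.1
      (by rw [hyl, hYt1.2])
    rw [hx', hy'] at hr
    exact hr
  have hWW : ∀ t, 1 ≤ t → t + 1 ≤ n →
      Reach I (j (g (2*t-1))) (W t) (j (g (2*t+1))) (W (t+1)) := by
    intro t h1 h2
    obtain ⟨x, y, hx, hy, hxl, hyl, hr⟩ := (hRiff (2*t-1) (2*t+1) (by omega)
      (by omega) (by omega) om om).mp homR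
    have e1 : 2*(t+1)-1 = 2*t+1 := by omega
    have hWt := hW t h1 (by omega)
    have hWt1 := hW (t+1) (by omega) h2
    rw [e1] at hWt1
    have hx' : x = W t := hicl (2*t-1) (by omega) (by omega) hx hWt.1
      (by rw [hxl, hWt.2])
    have hy' : y = W (t+1) := hicl (2*t+1) (by omega) (by omega) hy hWt1.1
      (by rw [hyl, hWt1.2])
    rw [hx', hy'] at hr
    exact hr
  have hYe : ∀ k, 1 ≤ k → k ≤ n-1 →
      Reach I (j (g (2*k-1))) (Y k) (j (g (2*k))) ((e (g (2*k))).1) := by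
    intro k h1 h2
    obtain ⟨x, hx, hxl, hr⟩ := (hViff (2*k-1) (2*k) (by omega) (by omega)
      (by omega) eta).mp hetaV
    have hYk := hY k h1 (by omega)
    have hx' : x = Y k := hicl (2*k-1) (by omega) (by omega) hx hYk.1
      (by rw [hxl, hYk.2])
    rw [hx'] at hr
    exact hr
  have heW : ∀ k, 1 ≤ k → k ≤ n-1 →
      Reach I (j (g (2*k)) + 1) ((e (g (2*k))).2) (j (g (2*k+1))) (W (k+1)) := by
    intro k h1 h2
    obtain ⟨y, hy, hyl, hr⟩ := (hUiff (2*k) (2*k+1) (by omega) (by omega)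
      (by omega) om).mp homU
    have e1 : 2*(k+1)-1 = 2*k+1 := by omega
    have hWk1 := hW (k+1) (by omega) (by omega)
    rw [e1] at hWk1
    have hy' : y = W (k+1) := hicl (2*k+1) (by omega) (by omega) hy hWk1.1
      (by rw [hyl, hWk1.2])
    rw [hy'] at hr
    exact hr
  have hedge : ∀ k, 1 ≤ k → k ≤ n-1 →
      Reach I (j (g (2*k))) ((e (g (2*k))).1) (j (g (2*k)) + 1) ((e (g (2*k))).2) := by
    intro k h1 h2
    have hq := he (g (2*k)) (hgmem (2*k) (by omega) (by omega)).1
      (hgmem (2*k) (by omega) (by omega)).2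
    exact reach_edge hq.2.1 hq.2.2 hq.1
  -- the marker-position and marker-value functions for each strand
  set pos : ℕ → ℕ → ℕ := fun k t =>
    if t ≤ k then j (g (2*t-1)) else if t = k+1 then j (g (2*k))
    else if t = k+2 then j (g (2*k)) + 1 else j (g (2*(t-2)-1)) with hpos
  set vall : ℕ → ℕ → A := fun k t =>
    if t ≤ k then Y t else if t = k+1 then (e (g (2*k))).1
    else if t = k+2 then (e (g (2*k))).2 else W (t-2) with hvall
  have hposA : ∀ k t, t ≤ k → pos k t = j (g (2*t-1)) := by
    intro k t h; simp only [hpos]; rw [if_pos h]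
  have hvalA : ∀ k t, t ≤ k → vall k t = Y t := by
    intro k t h; simp only [hvall]; rw [if_pos h]
  have hposB : ∀ k t, t = k+1 → pos k t = j (g (2*k)) := by
    intro k t h; simp only [hpos]; rw [if_neg (by omega), if_pos h]
  have hvalB : ∀ k t, t = k+1 → vall k t = (e (g (2*k))).1 := by
    intro k t h; simp only [hvall]; rw [if_neg (by omega), if_pos h]
  have hposC : ∀ k t, t = k+2 → pos k t = j (g (2*k)) + 1 := by
    intro k t h; simp only [hpos]; rw [if_neg (by omega), if_neg (by omega), if_pos h]
  have hvalC : ∀ k t, t = k+2 → vall k t = (e (g (2*k))).2 := by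
    intro k t h; simp only [hvall]; rw [if_neg (by omega), if_neg (by omega), if_pos h]
  have hposD : ∀ k t, k+3 ≤ t → pos k t = j (g (2*(t-2)-1)) := by
    intro k t h; simp only [hpos]
    rw [if_neg (by omega), if_neg (by omega), if_neg (by omega)]
  have hvalD : ∀ k t, k+3 ≤ t → vall k t = W (t-2) := by
    intro k t h; simp only [hvall]
    rw [if_neg (by omega), if_neg (by omega), if_neg (by omega)]
  -- construct the strands
  have hSex : ∀ k : ℕ, ∃ s : ℕ → A, (1 ≤ k → k ≤ n-1 →
      IsSolution I s ∧ ∀ t, 1 ≤ t → t ≤ n+2 → s (pos k t) = vall k t) := by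
    intro k
    by_cases hk : 1 ≤ k ∧ k ≤ n-1
    · obtain ⟨hk1, hk2⟩ := hk
      have hre : ∀ t, 1 ≤ t → t < n+2 →
          Reach I (pos k t) (vall k t) (pos k (t+1)) (vall k (t+1)) := by
        intro t ht1 ht2
        rcases (by omega : t+1 ≤ k ∨ t = k ∨ t = k+1 ∨ t = k+2 ∨ k+3 ≤ t)
          with h | h | h | h | h
        · rw [hposA k t (by omega), hposA k (t+1) h, hvalA k t (by omega),
            hvalA k (t+1) h]
          have e1 : 2*(t+1)-1 = 2*t+1 := by omega
          rw [e1]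
          exact hYY t ht1 (by omega)
        · rw [hposA k t (by omega), hposB k (t+1) (by omega), hvalA k t (by omega),
            hvalB k (t+1) (by omega)]
          rw [h]
          exact hYe k hk1 hk2
        · rw [hposB k t h, hposC k (t+1) (by omega), hvalB k t h,
            hvalC k (t+1) (by omega)]
          exact hedge k hk1 hk2
        · rw [hposC k t h, hposD k (t+1) (by omega), hvalC k t h,
            hvalD k (t+1) (by omega)]
          have e1 : 2*((t+1)-2)-1 = 2*k+1 := by omega
          have e2 : (t+1)-2 = k+1 := by omega
          rw [e1, e2]
          subst h
          exact heW k hk1 hk2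
        · rw [hposD k t h, hposD k (t+1) (by omega), hvalD k t h,
            hvalD k (t+1) (by omega)]
          have e1 : 2*((t+1)-2)-1 = 2*(t-2)+1 := by omega
          have e2 : (t+1)-2 = (t-2)+1 := by omega
          rw [e1, e2]
          exact hWW (t-2) (by omega) (by omega)
      have hmem1 : vall k 1 ∈ I.B (pos k 1) := by
        rw [hposA k 1 hk1, hvalA k 1 hk1]
        exact (hY 1 (le_refl _) (by omega)).1
      obtain ⟨sc, hsc, hscv⟩ := chain_sol hmem1 (n+2) (by omega) hre
      have hstep : ∀ t, 1 ≤ t → t < n+2 → pos k t ≤ pos k (t+1) :=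
        fun t h1 h2 => (hre t h1 h2).1
      have hmono := steps_mono hstep
      have hp1 : pos k 1 = j (g 1) := by
        have h := hposA k 1 hk1
        have e1 : 2*1-1 = 1 := by norm_num
        rw [e1] at h
        exact h
      have hpend : pos k (n+2) = j (g (2*n-1)) := by
        have h := hposD k (n+2) (by omega)
        have e1 : 2*((n+2)-2)-1 = 2*n-1 := by omega
        rw [e1] at h
        exact h
      obtain ⟨s, hs, hags⟩ := extend_full hsub
        (a := pos k 1) (b := pos k (n+2))
        (by rw [hp1]; exact hgbot 1 (by omega) (by omega))
        (hmono 1 (n+2) (le_refl _) (by omega) (le_refl _))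
        (by rw [hpend]; exact le_of_lt (hgtop (2*n-1) (by omega) (by omega)))
        hsc
      refine ⟨s, fun _ _ => ⟨hs, ?_⟩⟩
      intro t ht1 ht2
      rw [hags (pos k t) (hmono 1 t (le_refl _) ht1 ht2)
        (hmono t (n+2) ht1 ht2 (le_refl _)), hscv t ht1 ht2]
    · exact ⟨fun _ => (e 1).1, fun h1 h2 => absurd ⟨h1, h2⟩ hk⟩
  choose SS hSS using hSex
  -- values of the strands at the markers
  have hSY : ∀ k t, 1 ≤ k → k ≤ n-1 → 1 ≤ t → t ≤ k →
      SS k (j (g (2*t-1))) = Y t := by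
    intro k t hk1 hk2 ht1 ht2
    have h := (hSS k hk1 hk2).2 t ht1 (by omega)
    rw [hposA k t ht2, hvalA k t ht2] at h
    exact h
  have hSW : ∀ k t, 1 ≤ k → k ≤ n-1 → k+1 ≤ t → t ≤ n →
      SS k (j (g (2*t-1))) = W t := by
    intro k t hk1 hk2 ht1 ht2
    have h := (hSS k hk1 hk2).2 (t+2) (by omega) (by omega)
    rw [hposD k (t+2) (by omega), hvalD k (t+2) (by omega)] at h
    have e1 : (t+2)-2 = t := by omega
    rw [e1] at h
    exact h
  have hSe1 : ∀ k, 1 ≤ k → k ≤ n-1 → SS k (j (g (2*k))) = (e (g (2*k))).1 := by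
    intro k hk1 hk2
    have h := (hSS k hk1 hk2).2 (k+1) (by omega) (by omega)
    rw [hposB k (k+1) rfl, hvalB k (k+1) rfl] at h
    exact h
  have hSe2 : ∀ k, 1 ≤ k → k ≤ n-1 → SS k (j (g (2*k)) + 1) = (e (g (2*k))).2 := by
    intro k hk1 hk2
    have h := (hSS k hk1 hk2).2 (k+2) (by omega) (by omega)
    rw [hposC k (k+2) rfl, hvalC k (k+2) rfl] at h
    exact h
  -- assemble the braid
  refine ⟨fun k => SS (if k = 0 then 1 else if k ≤ n-1 then k else n-1),
          fun t => j (g (2*t-1)), ⟨?_, ?_, ?_, ?_, ?_⟩, ?_⟩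
  · -- all strands are solutions
    intro k _
    show IsSolution I (SS (if k = 0 then 1 else if k ≤ n-1 then k else n-1))
    split_ifs with h0 hle
    · exact (hSS 1 (le_refl _) (by omega)).1
    · exact (hSS k (by omega) hle).1
    · exact (hSS (n-1) (by omega) (by omega)).1
  · -- 1 ≤ idx 1
    show 1 ≤ j (g (2*1-1))
    have e1 : 2*1-1 = 1 := by norm_num
    rw [e1]
    exact hgbot 1 (by omega) (by omega)
  · -- idx n ≤ len
    show j (g (2*n-1)) ≤ I.len
    exact le_of_lt (hgtop (2*n-1) (by omega) (by omega))
  · -- idx strictly increasing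
    intro k h1 h2
    show j (g (2*k-1)) < j (g (2*(k+1)-1))
    have e1 : 2*(k+1)-1 = 2*k+1 := by omega
    rw [e1]
    exact hglt (2*k-1) (2*k+1) (by omega) (by omega) (by omega)
  · -- the crossing conditions
    intro k h1 h2
    have hc1 : (if k = 0 then 1 else if k ≤ n-1 then k else n-1) = k := by
      rw [if_neg (by omega), if_pos (by omega)]
    constructor
    · show SS (if k = 0 then 1 else if k ≤ n-1 then k else n-1) (j (g (2*k-1))) =
        SS (if k+1 = 0 then 1 else if k+1 ≤ n-1 then k+1 else n-1) (j (g (2*k-1)))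
      rw [hc1]
      by_cases hkn : k+1 ≤ n-1
      · have hc2 : (if k+1 = 0 then 1 else if k+1 ≤ n-1 then k+1 else n-1) = k+1 := by
          rw [if_neg (by omega), if_pos hkn]
        rw [hc2, hSY k k h1 (by omega) h1 (le_refl _),
          hSY (k+1) k (by omega) hkn h1 (by omega)]
      · have hc2 : (if k+1 = 0 then 1 else if k+1 ≤ n-1 then k+1 else n-1) = n-1 := by
          rw [if_neg (by omega), if_neg hkn]
        rw [hc2]
        have e1 : n-1 = k := by omega
        rw [e1]
    · show SS (if k-1 = 0 then 1 else if k-1 ≤ n-1 then k-1 else n-1) (j (g (2*(k+1)-1))) =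
        SS (if k = 0 then 1 else if k ≤ n-1 then k else n-1) (j (g (2*(k+1)-1)))
      by_cases hk1 : k = 1
      · have hc0 : (if k-1 = 0 then 1 else if k-1 ≤ n-1 then k-1 else n-1) = 1 := by
          rw [if_pos (by omega)]
        rw [hc0, hc1, hk1]
      · have hc0 : (if k-1 = 0 then 1 else if k-1 ≤ n-1 then k-1 else n-1) = k-1 := by
          rw [if_neg (by omega), if_pos (by omega)]
        rw [hc0, hc1]
        rw [hSW (k-1) (k+1) (by omega) (by omega) (by omega) (by omega),
          hSW k (k+1) (by omega) (by omega) (by omega) (by omega)]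
  · -- threading through the prescribed edges
    intro k h1 h2
    have hc1 : (if k = 0 then 1 else if k ≤ n-1 then k else n-1) = k := by
      rw [if_neg (by omega), if_pos (by omega)]
    refine ⟨g (2*k), (hgmem (2*k) (by omega) (by omega)).1,
      (hgmem (2*k) (by omega) (by omega)).2, ?_, ?_, ?_⟩
    · show j (g (2*k-1)) ≤ j (g (2*k))
      exact le_of_lt (hglt (2*k-1) (2*k) (by omega) (by omega) (by omega))
    · show j (g (2*k)) < j (g (2*(k+1)-1))
      have e1 : 2*(k+1)-1 = 2*k+1 := by omega
      rw [e1]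
      exact hglt (2*k) (2*k+1) (by omega) (by omega) (by omega)
    · show (SS (if k = 0 then 1 else if k ≤ n-1 then k else n-1) (j (g (2*k))),
          SS (if k = 0 then 1 else if k ≤ n-1 then k else n-1) (j (g (2*k)) + 1)) =
          e (g (2*k))
      rw [hc1, hSe1 k (by omega) (by omega), hSe2 k (by omega) (by omega)]



end CSPPaper
end
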